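/- arXiv:2410.02758 — 7 statements merged into one kernel-verified Lean document; each statement's English description precedes it below -/
import Mathlib

section
/- For all natural numbers m ≤ d, the m! × m! Gram matrix G, indexed by pairs of permutations σ, τ of {1,…,m} with entries G_{σ,τ} = d^{c(στ⁻¹)}, is invertible (equivalently, the family of replica permutation matrices (P_σ)_{σ ∈ S_m} acting on (ℂ^d)^{⊗m} is linearly independent over ℂ). -/
/-!
`G` is the Gram matrix of the real matrices `P_σ` for the Frobenius inner product, and
`⟪P_σ, P_τ⟫` counts the `g : Fin m → Fin d` with `g ∘ σ = g ∘ τ`, i.e. the colourings constant on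
the cycles of `στ⁻¹`; there are `d ^ c(στ⁻¹)` of them. A Gram matrix is positive definite, hence
invertible, as soon as its vectors are linearly independent. The `P_σ` are linearly independent
over any ring once `m ≤ d`: for an injection `ι : Fin m → Fin d`, the entry of `P_τ` at
`(ι ∘ σ, ι)` is `1` if `σ = τ` and `0` otherwise.
-/

/-- Number of cycles of a permutation, counting fixed points as cycles of length 1. -/
def cycleCount {m : ℕ} (σ : Equiv.Perm (Fin m)) : ℕ :=
  σ.cycleType.card + (Finset.univ.filter fun x => σ x = x).card

/-- The Gram matrix of permutations, `G_{σ,τ} = d^{c(στ⁻¹)}`. -/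
def gramMatrix (d m : ℕ) :
    Matrix (Equiv.Perm (Fin m)) (Equiv.Perm (Fin m)) ℝ :=
  fun σ τ => (d : ℝ) ^ cycleCount (σ * τ⁻¹)

/-- The replica permutation matrix `P_σ` on `(ℂ^d)^{⊗m}`. -/
def replicaPerm (d m : ℕ) (σ : Equiv.Perm (Fin m)) :
    Matrix (Fin m → Fin d) (Fin m → Fin d) ℂ :=
  fun f g => if f = g ∘ σ then 1 else 0

open Equiv Equiv.Perm Finset Matrix

namespace Equiv.Perm

variable {α β : Type*}

theorem sameCycle_setoid_le_ker_iff [Finite α] {π : Perm α} {g : α → β} :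
    SameCycle.setoid π ≤ Setoid.ker g ↔ g ∘ π = g := by
  refine ⟨fun h => funext fun x => (h (sameCycle_apply_right.mpr (SameCycle.refl π x))).symm, ?_⟩
  intro h x y hxy
  obtain ⟨n, -, rfl⟩ := hxy.exists_nat_pow_eq
  have hsemiconj : Function.Semiconj g π id := fun x => congrFun h x
  simpa [coe_pow] using (hsemiconj.iterate_right n x).symm

theorem nat_card_comp_eq_self [Finite α] (π : Perm α) :
    Nat.card {g : α → β // g ∘ π = g} = Nat.card β ^ Nat.card (Quotient (SameCycle.setoid π)) := by
  rw [← Nat.card_fun, ← Nat.card_congr (Setoid.liftEquiv (SameCycle.setoid π)),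
    Nat.card_congr (Equiv.subtypeEquivRight fun g => sameCycle_setoid_le_ker_iff)]

variable [Fintype α] [DecidableEq α]

def cycleFactorOrFixedPoint (π : Perm α) (x : α) :
    {c // c ∈ π.cycleFactorsFinset} ⊕ {x // π x = x} :=
  if hx : π x = x then .inr ⟨x, hx⟩
  else .inl ⟨π.cycleOf x, cycleOf_mem_cycleFactorsFinset_iff.mpr (mem_support.mpr hx)⟩

theorem sameCycle_iff_cycleFactorOrFixedPoint_eq {π : Perm α} {x y : α} :
    π.SameCycle x y ↔ cycleFactorOrFixedPoint π x = cycleFactorOrFixedPoint π y := by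
  by_cases hx : π x = x <;> by_cases hy : π y = y <;>
    simp only [cycleFactorOrFixedPoint, hx, hy, dif_pos, dif_neg, not_false_eq_true,
      reduceCtorEq, Sum.inl.injEq, Sum.inr.injEq, Subtype.mk.injEq, iff_false]
  · exact ⟨fun h => h.eq_of_left hx, fun h => h ▸ SameCycle.refl π x⟩
  · exact fun h => hy (h.apply_eq_self_iff.mp hx)
  · exact fun h => hx (h.apply_eq_self_iff.mpr hy)
  · exact sameCycle_iff_cycleOf_eq_of_mem_support (mem_support.mpr hx) (mem_support.mpr hy)

theorem cycleFactorOrFixedPoint_surjective (π : Perm α) :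
    Function.Surjective (cycleFactorOrFixedPoint π) := by
  rintro (⟨c, hc⟩ | ⟨x, hx⟩)
  · obtain ⟨a, ha⟩ := (mem_cycleFactorsFinset_iff.mp hc).1.nonempty_support
    have hπa : π a ≠ a := mem_support.mp (mem_cycleFactorsFinset_support_le hc ha)
    refine ⟨a, ?_⟩
    simp [cycleFactorOrFixedPoint, hπa, cycle_is_cycleOf ha hc]
  · exact ⟨x, by simp [cycleFactorOrFixedPoint, hx]⟩

theorem nat_card_quotient_sameCycle (π : Perm α) :
    Nat.card (Quotient (SameCycle.setoid π)) = π.cycleType.card + #{x | π x = x} := by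
  have hker : SameCycle.setoid π = Setoid.ker (cycleFactorOrFixedPoint π) :=
    Setoid.ext fun _ _ => sameCycle_iff_cycleFactorOrFixedPoint_eq
  rw [hker, Nat.card_congr (Setoid.quotientKerEquivOfSurjective _
    (cycleFactorOrFixedPoint_surjective π)), Nat.card_sum, cycleType_def, Multiset.card_map]
  simp [Nat.card_eq_fintype_card, Fintype.card_subtype]

end Equiv.Perm

section Replica

variable {α β : Type*} [Fintype α] [DecidableEq α] [DecidableEq β] (R : Type*)

def replicaMatrix [Zero R] [One R] (σ : Perm α) : Matrix (α → β) (α → β) R :=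
  fun f g => if f = g ∘ σ then 1 else 0

theorem replicaMatrix_apply_comp [Zero R] [One R] {ι : α → β} (hι : Function.Injective ι)
    (σ τ : Perm α) : replicaMatrix R τ (ι ∘ σ) ι = if σ = τ then 1 else 0 := by
  simp only [replicaMatrix, (hι.comp_left).eq_iff, DFunLike.coe_fn_eq]

variable [Fintype β]

theorem linearIndependent_replicaMatrix [CommRing R]
    (h : Fintype.card α ≤ Fintype.card β) :
    LinearIndependent R (replicaMatrix R : Perm α → Matrix (α → β) (α → β) R) := by
  obtain ⟨ι⟩ := Function.Embedding.nonempty_of_card_le h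
  refine .of_pairwise_dual_eq_zero_one (R := R) _
    (fun σ : Perm α => entryLinearMap R R (⇑ι ∘ ⇑σ) ⇑ι) ?_ ?_
  · intro σ τ hστ
    simp [replicaMatrix_apply_comp R ι.injective, hστ]
  · intro σ
    simp [replicaMatrix_apply_comp R ι.injective]

noncomputable def replicaVector (σ : Perm α) : EuclideanSpace ℝ ((α → β) × (α → β)) :=
  WithLp.toLp 2 fun p => replicaMatrix ℝ σ p.1 p.2

theorem linearIndependent_replicaVector (h : Fintype.card α ≤ Fintype.card β) :
    LinearIndependent ℝ (replicaVector (α := α) (β := β)) :=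
  let e := (LinearEquiv.curry ℝ ℝ (α → β) (α → β)).symm ≪≫ₗ (WithLp.linearEquiv 2 ℝ _).symm
  (linearIndependent_replicaMatrix ℝ h).map' e.toLinearMap e.ker

theorem card_comp_eq_comp (σ τ : Perm α) :
    #{g : α → β | g ∘ σ = g ∘ τ} =
      Fintype.card β ^ Nat.card (Quotient (SameCycle.setoid (σ * τ⁻¹))) := by
  have hfix : ∀ g : α → β, g ∘ ⇑(σ * τ⁻¹) = g ↔ g ∘ σ = g ∘ τ := fun g =>
    comp_symm_eq τ g (g ∘ σ)
  rw [← Fintype.card_subtype, ← Nat.card_eq_fintype_card, ← Nat.card_eq_fintype_card,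
    ← nat_card_comp_eq_self, Nat.card_congr (Equiv.subtypeEquivRight hfix)]

theorem gram_replicaVector (σ τ : Perm α) :
    gram ℝ (replicaVector (β := β)) σ τ =
      (Fintype.card β : ℝ) ^ Nat.card (Quotient (SameCycle.setoid (σ * τ⁻¹))) := by
  rw [gram_apply, replicaVector, replicaVector, EuclideanSpace.inner_toLp_toLp]
  simp only [dotProduct, star_trivial, Fintype.sum_prod_type, replicaMatrix]
  rw [Finset.sum_comm]
  simp only [mul_ite, mul_one, mul_zero, sum_ite_eq', mem_univ, if_true]
  rw [sum_boole, card_comp_eq_comp, Nat.cast_pow]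

end Replica

theorem cycleCount_eq_nat_card_quotient {m : ℕ} (π : Perm (Fin m)) :
    cycleCount π = Nat.card (Quotient (SameCycle.setoid π)) :=
  (nat_card_quotient_sameCycle π).symm

/-- For `m ≤ d` the Gram matrix `G_{σ,τ} = d^{c(στ⁻¹)}` is invertible; equivalently,
the replica permutation matrices `(P_σ)_{σ ∈ S_m}` are linearly independent over `ℂ`. -/
theorem gramMatrix_isUnit (m d : ℕ) (hmd : m ≤ d) :
    IsUnit (gramMatrix d m) ∧
      LinearIndependent ℂ (fun σ : Equiv.Perm (Fin m) => replicaPerm d m σ) := by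
  have hcard : Fintype.card (Fin m) ≤ Fintype.card (Fin d) := by simpa using hmd
  have hgram : gramMatrix d m = gram ℝ (replicaVector (β := Fin d)) := by
    ext σ τ
    rw [gram_replicaVector, Fintype.card_fin, ← cycleCount_eq_nat_card_quotient, gramMatrix]
  refine ⟨?_, linearIndependent_replicaMatrix ℂ hcard⟩
  rw [hgram]
  have hli := linearIndependent_replicaVector (α := Fin m) (β := Fin d) hcard
  exact (posDef_gram_of_linearIndependent hli).isUnit
end

section
/- For all natural numbers 1 ≤ m ≤ d, the sum of the Weingarten function over all permutations of {1,…,m} equals the reciprocal of the rising factorial: ∑_{τ ∈ S_m} Wg_d(e, τ) = (d-1)!/(d+m-1)!, where e is the identity permutation. Equivalently, every row sum of the inverse Gram matrix G⁻¹ equals ((d+m-1)!/(d-1)!)⁻¹. -/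
/-- The Weingarten function `Wg_d(σ,τ) = (G⁻¹)_{σ,τ}`. -/
noncomputable def weingarten (d m : ℕ) :
    Matrix (Equiv.Perm (Fin m)) (Equiv.Perm (Fin m)) ℝ :=
  (gramMatrix d m)⁻¹

/-!
The functions `f : [m] → [d]` with `f ∘ σ = f` are those constant on the cycles of `σ`, so there
are `d^{c(σ)}` of them, and `G_{σ,τ} = #{f | f ∘ σ = f ∘ τ}`. Thus `G = AᵀA`, where column `σ` of
`A` is the indicator of the pairs `(f, f ∘ σ)`. For `m ≤ d` an injection `ι : [m] → [d]` reads off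
`z σ` from `A z` at the pair `(ι, ι ∘ σ)`, so `A` is injective and `G` is positive definite.
Every row sum of `G` is `∑_π d^{c(π)}`, which by Burnside's lemma for `S_m` acting on `[d]^[m]` is
`m!` times the number of size-`m` multisets on `[d]`, i.e. the rising factorial
`r = d (d+1) ⋯ (d+m-1)`. Hence `G 𝟙 = r 𝟙` and `G⁻¹ 𝟙 = r⁻¹ 𝟙`.
-/

open Equiv Equiv.Perm Finset MulAction
open scoped Nat

namespace Equiv.Perm

variable {α β : Type*}

theorem sameCycle_le_ker_iff [Finite α] (σ : Perm α) (f : α → β) :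
    SameCycle.setoid σ ≤ Setoid.ker f ↔ f ∘ σ = f := by
  refine ⟨fun h => funext fun x => (h (SameCycle.refl σ x).apply_right).symm, fun h x y hxy => ?_⟩
  obtain ⟨n, rfl⟩ := hxy.exists_nat_pow_eq
  clear hxy
  induction n with
  | zero => rfl
  | succ n ih =>
    simpa only [Setoid.ker_def, pow_succ', mul_apply, Function.comp_apply] using
      ih.trans (congrFun h _).symm

theorem natCard_comp_eq_self [Finite α] (σ : Perm α) :
    Nat.card {f : α → β // f ∘ σ = f} = Nat.card β ^ Nat.card (Quotient (SameCycle.setoid σ)) := by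
  rw [← Nat.card_fun]
  exact Nat.card_congr <|
    (Equiv.subtypeEquivRight fun f => (sameCycle_le_ker_iff σ f).symm).trans (Setoid.liftEquiv _)

theorem exists_comp_eq_of_map_univ_val_eq [Fintype α] [DecidableEq β] {f g : α → β}
    (h : univ.val.map f = univ.val.map g) : ∃ σ : Perm α, g ∘ σ = f := by
  have hfiber (b : β) : Fintype.card {a // f a = b} = Fintype.card {a // g a = b} := by
    simpa [Multiset.count_map, Fintype.card_subtype, eq_comm, Finset.card_def] using
      congrArg (Multiset.count b) h
  exact ⟨ofFiberEquiv fun b => Fintype.equivOfCardEq (hfiber b), funext (ofFiberEquiv_map _)⟩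

variable [Fintype α] [DecidableEq α]

-- A `SameCycle` class is either a fixed point or the support of exactly one cycle factor.
def fixedPointOrCycle (σ : Perm α) (x : α) : {x // σ x = x} ⊕ σ.cycleFactorsFinset :=
  if h : σ x = x then .inl ⟨x, h⟩
  else .inr ⟨σ.cycleOf x, cycleOf_mem_cycleFactorsFinset_iff.2 (mem_support.2 h)⟩

theorem fixedPointOrCycle_eq_iff (σ : Perm α) (x y : α) :
    fixedPointOrCycle σ x = fixedPointOrCycle σ y ↔ σ.SameCycle x y := by
  by_cases hx : σ x = x <;> by_cases hy : σ y = y <;>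
    simp only [fixedPointOrCycle, hx, hy, dif_pos, dif_neg, not_false_eq_true, reduceCtorEq,
      false_iff, Sum.inl.injEq, Sum.inr.injEq, Subtype.mk.injEq]
  · exact ⟨fun h => h ▸ SameCycle.refl σ x, fun h => h.eq_of_left hx⟩
  · exact fun h => hy (h.apply_eq_self_iff.1 hx)
  · exact fun h => hx (h.apply_eq_self_iff.2 hy)
  · exact (sameCycle_iff_cycleOf_eq_of_mem_support (mem_support.2 hx) (mem_support.2 hy)).symm

theorem fixedPointOrCycle_surjective (σ : Perm α) : Function.Surjective (fixedPointOrCycle σ) := by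
  rintro (⟨x, hx⟩ | ⟨c, hc⟩)
  · exact ⟨x, by simp [fixedPointOrCycle, hx]⟩
  · obtain ⟨x, hx⟩ := (mem_cycleFactorsFinset_iff.1 hc).1.nonempty_support
    have hσx : σ x ≠ x := mem_support.1 (mem_cycleFactorsFinset_support_le hc hx)
    exact ⟨x, by simp [fixedPointOrCycle, hσx, ← cycle_is_cycleOf hx hc]⟩

theorem natCard_quotient_sameCycle (σ : Perm α) :
    Nat.card (Quotient (SameCycle.setoid σ)) = σ.cycleType.card + #{x | σ x = x} := by
  have hbij : Function.Bijective
      (Quotient.lift (s := SameCycle.setoid σ) (fixedPointOrCycle σ)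
        fun x y h => (fixedPointOrCycle_eq_iff σ x y).2 h) := by
    constructor
    · rintro ⟨x⟩ ⟨y⟩ h
      exact Quotient.sound ((fixedPointOrCycle_eq_iff σ x y).1 h)
    · intro t
      obtain ⟨x, rfl⟩ := fixedPointOrCycle_surjective σ t
      exact ⟨⟦x⟧, rfl⟩
  rw [Nat.card_eq_of_bijective _ hbij, Nat.card_eq_fintype_card, Fintype.card_sum,
    Fintype.card_subtype, Fintype.card_coe, cycleType_def, Multiset.card_map, add_comm]
  rfl

-- Burnside's lemma for `(Perm α)ᵈᵐᵃ`, which acts on `α → β` by precomposition.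
theorem sum_natCard_comp_eq_self [Finite β] :
    ∑ σ : Perm α, Nat.card {f : α → β // f ∘ σ = f}
      = Nat.card (orbitRel.Quotient (Perm α)ᵈᵐᵃ (α → β)) * (Nat.card α)! := by
  calc ∑ σ : Perm α, Nat.card {f : α → β // f ∘ σ = f}
      = Nat.card (Σ σ : Perm α, fixedBy (α → β) (DomMulAct.mk σ)) := Nat.card_sigma.symm
    _ = Nat.card (Σ g : (Perm α)ᵈᵐᵃ, fixedBy (α → β) g) :=
        Nat.card_congr (Equiv.sigmaCongrLeft (β := fun g => fixedBy (α → β) g) DomMulAct.mk)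
    _ = Nat.card (orbitRel.Quotient (Perm α)ᵈᵐᵃ (α → β) × (Perm α)ᵈᵐᵃ) :=
        Nat.card_congr (sigmaFixedByEquivOrbitsProdGroup _ _)
    _ = _ := by rw [Nat.card_prod, Nat.card_congr DomMulAct.mk.symm, Nat.card_perm]

end Equiv.Perm

namespace Sym

variable {β : Type*} {n : ℕ}

def ofFn (f : Fin n → β) : Sym β n := ⟨univ.val.map f, by simp⟩

theorem ofFn_eq_ofFn_iff {f g : Fin n → β} : ofFn f = ofFn g ↔ ∃ σ : Perm (Fin n), g ∘ σ = f := by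
  classical
  refine ⟨fun h => exists_comp_eq_of_map_univ_val_eq (congrArg Sym.toMultiset h), ?_⟩
  rintro ⟨σ, rfl⟩
  exact Sym.coe_injective <|
    (Multiset.map_map _ _ _).symm.trans (congrArg _ (Multiset.map_univ_val_equiv σ))

theorem ofFn_surjective : Function.Surjective (ofFn : (Fin n → β) → Sym β n) := by
  intro s
  have hlen : (s : Multiset β).toList.length = n := by simp
  refine ⟨fun i => (s : Multiset β).toList.get (i.cast hlen.symm), Sym.coe_injective ?_⟩
  change (univ : Finset (Fin n)).val.map _ = (s : Multiset β)
  rw [Fin.univ_val_map, ← List.ofFn_congr hlen, List.ofFn_get, Multiset.coe_toList]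

end Sym

theorem natCard_orbitRel_quotient_eq_natCard_sym (n : ℕ) (β : Type*) :
    Nat.card (orbitRel.Quotient (Perm (Fin n))ᵈᵐᵃ (Fin n → β)) = Nat.card (Sym β n) := by
  have ofFn_eq_iff (f g : Fin n → β) :
      Sym.ofFn f = Sym.ofFn g ↔ orbitRel (Perm (Fin n))ᵈᵐᵃ _ f g := by
    rw [orbitRel_apply, mem_orbit_iff, Sym.ofFn_eq_ofFn_iff, DomMulAct.mk.exists_congr_left]
    rfl
  refine Nat.card_eq_of_bijective (Quotient.lift Sym.ofFn fun f g h => (ofFn_eq_iff f g).2 h)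
    ⟨fun p q => ?_, fun s => ?_⟩
  · induction p using Quotient.inductionOn
    induction q using Quotient.inductionOn
    exact fun h => Quotient.sound ((ofFn_eq_iff _ _).1 h)
  · obtain ⟨f, rfl⟩ := Sym.ofFn_surjective s
    exact ⟨⟦f⟧, rfl⟩

variable {d m : ℕ}

theorem natCard_comp_eq_self_eq_pow_cycleCount (σ : Perm (Fin m)) :
    Nat.card {f : Fin m → Fin d // f ∘ σ = f} = d ^ cycleCount σ := by
  rw [natCard_comp_eq_self, natCard_quotient_sameCycle, Nat.card_fin, cycleCount]

theorem sum_pow_cycleCount :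
    ∑ σ : Perm (Fin m), d ^ cycleCount σ = d.ascFactorial m := by
  simp_rw [← natCard_comp_eq_self_eq_pow_cycleCount]
  rw [sum_natCard_comp_eq_self, natCard_orbitRel_quotient_eq_natCard_sym,
    Sym.natCard_sym_eq_choose, Nat.card_fin, Nat.card_fin,
    Nat.ascFactorial_eq_factorial_mul_choose', mul_comm]

open Matrix

-- Column `σ` is the permutation operator of `σ` on `(ℝ^β)^{⊗α}`, flattened into a vector.
def compIndicator (α β : Type*) [Fintype α] [DecidableEq β] :
    Matrix ((α → β) × (α → β)) (Perm α) ℝ :=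
  of fun p σ => if p.1 ∘ σ = p.2 then 1 else 0

section compIndicator

variable {α β : Type*} [Fintype α] [DecidableEq α] [DecidableEq β]

theorem compIndicator_mulVec_apply_of_injective {ι : α → β} (hι : Function.Injective ι)
    (z : Perm α → ℝ) (σ : Perm α) : (compIndicator α β *ᵥ z) (ι, ι ∘ σ) = z σ := by
  simp only [mulVec, dotProduct, compIndicator, of_apply, ite_mul, one_mul, zero_mul,
    hι.comp_left.eq_iff, DFunLike.coe_fn_eq, Finset.sum_ite_eq', Finset.mem_univ, if_true]

theorem compIndicator_mulVec_injective {ι : α → β} (hι : Function.Injective ι) :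
    Function.Injective (compIndicator α β).mulVec := fun z w h => funext fun σ => by
  rw [← compIndicator_mulVec_apply_of_injective hι z, h, compIndicator_mulVec_apply_of_injective hι]

theorem transpose_mul_compIndicator_apply [Fintype β] (σ τ : Perm α) :
    ((compIndicator α β)ᵀ * compIndicator α β) σ τ = #{f : α → β | f ∘ σ = f ∘ τ} := by
  simp only [Matrix.mul_apply, transpose_apply, compIndicator, of_apply, Fintype.sum_prod_type,
    ite_mul, one_mul, zero_mul, Finset.sum_ite_eq, Finset.mem_univ, if_true]
  simp only [Finset.sum_boole, eq_comm]

end compIndicator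

theorem Matrix.sum_inv_apply_of_forall_sum_apply_eq {n K : Type*} [Fintype n] [DecidableEq n]
    [Field K] {M : Matrix n n K} (hM : IsUnit M) {c : K} (h : ∀ i, ∑ j, M i j = c) (i : n) :
    ∑ j, M⁻¹ i j = c⁻¹ := by
  have hrow : M *ᵥ (fun _ => 1) = fun _ => c := funext fun i => by
    simp only [mulVec, dotProduct, mul_one, h]
  have hinv : M⁻¹ *ᵥ (fun _ => c) = fun _ => 1 := by
    rw [← hrow, mulVec_mulVec, nonsing_inv_mul _ ((isUnit_iff_isUnit_det M).1 hM), one_mulVec]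
  refine eq_inv_of_mul_eq_one_left ?_
  simpa only [mulVec, dotProduct, Finset.sum_mul] using congrFun hinv i

theorem card_comp_eq_comp_s4 (σ τ : Perm (Fin m)) :
    #{f : Fin m → Fin d | f ∘ σ = f ∘ τ} = d ^ cycleCount (σ * τ⁻¹) := by
  rw [← natCard_comp_eq_self_eq_pow_cycleCount, Nat.card_eq_fintype_card, Fintype.card_subtype]
  congr 1
  ext f
  rw [Finset.mem_filter, Finset.mem_filter, coe_mul, Perm.inv_def, ← Function.comp_assoc,
    comp_symm_eq]

theorem gramMatrix_eq_conjTranspose_mul_self :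
    gramMatrix d m = (compIndicator (Fin m) (Fin d))ᴴ * compIndicator (Fin m) (Fin d) := by
  ext σ τ
  rw [conjTranspose_eq_transpose_of_trivial, transpose_mul_compIndicator_apply, card_comp_eq_comp_s4]
  simp [gramMatrix]

theorem gramMatrix_posDef (h : m ≤ d) : (gramMatrix d m).PosDef :=
  gramMatrix_eq_conjTranspose_mul_self ▸
    PosDef.conjTranspose_mul_self _ (compIndicator_mulVec_injective (Fin.castLE_injective h))

theorem sum_gramMatrix_apply (σ : Perm (Fin m)) :
    ∑ τ, gramMatrix d m σ τ = d.ascFactorial m := by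
  calc ∑ τ, gramMatrix d m σ τ
      = ∑ τ, (d : ℝ) ^ cycleCount (((Equiv.inv _).trans (Equiv.mulLeft σ)) τ) := rfl
    _ = ∑ π, (d : ℝ) ^ cycleCount π := Equiv.sum_comp _ (fun π => (d : ℝ) ^ cycleCount π)
    _ = d.ascFactorial m := mod_cast sum_pow_cycleCount

/-- For `1 ≤ m ≤ d`, `∑_{τ ∈ S_m} Wg_d(e, τ) = (d-1)!/(d+m-1)!`; equivalently, every
row sum of the inverse Gram matrix equals `((d+m-1)!/(d-1)!)⁻¹`. -/
theorem weingarten_sum (m d : ℕ) (hm : 1 ≤ m) (hmd : m ≤ d) :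
    (∑ τ : Equiv.Perm (Fin m), weingarten d m 1 τ)
        = ((d - 1).factorial : ℝ) / ((d + m - 1).factorial : ℝ) ∧
      ∀ σ : Equiv.Perm (Fin m),
        (∑ τ : Equiv.Perm (Fin m), weingarten d m σ τ)
          = (((d + m - 1).factorial : ℝ) / ((d - 1).factorial : ℝ))⁻¹ := by
  have hrow (σ : Perm (Fin m)) : ∑ τ, weingarten d m σ τ = ((d.ascFactorial m : ℕ) : ℝ)⁻¹ :=
    sum_inv_apply_of_forall_sum_apply_eq (gramMatrix_posDef hmd).isUnit sum_gramMatrix_apply σ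
  have hfac : ((d + m - 1)! : ℝ) / (d - 1)! = d.ascFactorial m := by
    rw [div_eq_iff (by positivity), ← Nat.factorial_mul_ascFactorial' d m (by omega)]
    push_cast
    ring
  exact ⟨by rw [hrow, ← hfac, inv_div], fun σ => by rw [hrow, hfac]⟩
end

section
/- There exists a constant C > 0 such that for all natural numbers m ≥ 1 and d with 2m² ≤ d, the Weingarten function at the identity satisfies |d^m · Wg_d(e, e) − 1| ≤ C · m²/d, where e is the identity permutation of {1,…,m}. In other words, Wg_d(e) = d^{-m}(1 + O(m²/d)). -/
open Finset

namespace Equiv.Perm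
variable {α : Type*} [DecidableEq α]

theorem isSwap_of_mem_zipWith_swap_tail {l : List α} (hl : l.Nodup) :
    ∀ τ ∈ List.zipWith swap l l.tail, τ.IsSwap := by
  induction l with
  | nil => simp
  | cons a l ih =>
    cases l with
    | nil => simp
    | cons b l =>
      simp only [List.tail_cons, List.zipWith_cons_cons, List.mem_cons, forall_eq_or_imp]
      have hab : a ≠ b := fun h => (List.nodup_cons.1 hl).1 (h ▸ List.mem_cons_self)
      exact ⟨⟨a, b, hab, rfl⟩, ih hl.of_cons⟩

variable [Fintype α]

theorem IsCycle.exists_isSwap_list {σ : Perm α} (hσ : σ.IsCycle) :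
    ∃ l : List (Perm α), (∀ τ ∈ l, τ.IsSwap) ∧ l.length + 1 = #σ.support ∧ l.prod = σ := by
  obtain ⟨x, hx, -⟩ := id hσ
  have hcyc : σ.cycleOf x = σ := hσ.cycleOf_eq hx
  refine ⟨List.zipWith swap (σ.toList x) (σ.toList x).tail,
    isSwap_of_mem_zipWith_swap_tail (nodup_toList σ x), ?_, ?_⟩
  · have h2 := two_le_length_toList_iff_mem_support.2 (mem_support.2 hx)
    rw [List.length_zipWith, List.length_tail, length_toList, hcyc] at *
    omega
  · rw [← List.formPerm, formPerm_toList, hcyc]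

theorem exists_isSwap_list (σ : Perm α) :
    ∃ l : List (Perm α), (∀ τ ∈ l, τ.IsSwap) ∧
      l.length + Multiset.card σ.cycleType = #σ.support ∧ l.prod = σ := by
  induction σ using cycle_induction_on with
  | base_one => exact ⟨[], by simp, by simp, rfl⟩
  | base_cycles σ hσ =>
    obtain ⟨l, hswap, hlen, hprod⟩ := hσ.exists_isSwap_list
    exact ⟨l, hswap, by rw [hσ.cycleType]; simpa using hlen, hprod⟩
  | induction_disjoint σ τ hd _ hσ hτ =>
    obtain ⟨l₁, hswap₁, hlen₁, hprod₁⟩ := hσ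
    obtain ⟨l₂, hswap₂, hlen₂, hprod₂⟩ := hτ
    refine ⟨l₁ ++ l₂, ?_, ?_, by rw [List.prod_append, hprod₁, hprod₂]⟩
    · simpa only [List.mem_append, or_imp, forall_and] using ⟨hswap₁, hswap₂⟩
    · rw [hd.cycleType_mul, hd.card_support_mul, List.length_append, Multiset.card_add]
      omega

def transpositionLength (σ : Perm α) : ℕ := #σ.support - Multiset.card σ.cycleType

theorem transpositionLength_le_card (σ : Perm α) : σ.transpositionLength ≤ Fintype.card α :=
  (Nat.sub_le _ _).trans (card_le_univ _)

open scoped Classical in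
theorem card_isSwap : #{τ : Perm α | τ.IsSwap} = (Fintype.card α).choose 2 := by
  rw [← card_univ, ← card_powersetCard]
  refine card_nbij support (fun τ hτ => ?_) (fun τ₁ hτ₁ τ₂ hτ₂ h => ?_) (fun s hs => ?_)
  · exact mem_powersetCard.2 ⟨subset_univ _, card_support_eq_two.2 (mem_filter.1 hτ).2⟩
  · obtain ⟨a, b, hab, rfl⟩ := (mem_filter.1 hτ₁).2
    obtain ⟨c, d, hcd, rfl⟩ := (mem_filter.1 hτ₂).2
    have h' : ({a, b} : Set α) = {c, d} := by
      rw [← coe_pair, ← coe_pair, ← support_swap hab, ← support_swap hcd, h]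
    rcases Set.pair_eq_pair_iff.1 h' with ⟨rfl, rfl⟩ | ⟨rfl, rfl⟩
    exacts [rfl, swap_comm _ _]
  · obtain ⟨a, b, hab, rfl⟩ := card_eq_two.1 (mem_powersetCard.1 hs).2
    exact ⟨swap a b, mem_filter.2 ⟨mem_univ _, a, b, hab, rfl⟩, support_swap hab⟩

open scoped Classical in
theorem card_transpositionLength_eq_le (k : ℕ) :
    #{σ : Perm α | σ.transpositionLength = k} ≤ #{τ : Perm α | τ.IsSwap} ^ k := by
  calc #{σ : Perm α | σ.transpositionLength = k}
      ≤ #(Fintype.piFinset fun _ : Fin k => ({τ : Perm α | τ.IsSwap} : Finset _)) := by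
        refine card_le_card_of_surjOn (fun w => (List.ofFn w).prod) fun σ hσ => ?_
        obtain ⟨l, hswap, hlen, rfl⟩ := exists_isSwap_list σ
        have hk : l.length = k := by
          rw [← (mem_filter.1 (mem_coe.1 hσ)).2, transpositionLength]; omega
        subst hk
        exact ⟨l.get, Fintype.mem_piFinset.2 fun i =>
          mem_filter.2 ⟨mem_univ _, hswap _ (List.get_mem l i)⟩, by simp [List.ofFn_get]⟩
    _ = _ := by simp [Fintype.card_piFinset]

open scoped Classical in
theorem sum_pow_transpositionLength_le {t q : ℝ} (ht : 0 ≤ t)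
    (hq : #{τ : Perm α | τ.IsSwap} * t ≤ q) (hq1 : q < 1) :
    ∑ σ : Perm α, t ^ σ.transpositionLength ≤ (1 - q)⁻¹ := by
  have hq0 : 0 ≤ q := le_trans (by positivity) hq
  rw [← sum_fiberwise_of_maps_to' (t := range (Fintype.card α + 1))
    (fun σ _ => mem_range_succ_iff.2 σ.transpositionLength_le_card)]
  calc _ = ∑ k ∈ range (Fintype.card α + 1),
          (#{σ : Perm α | σ.transpositionLength = k} : ℝ) * t ^ k := by
        simp only [sum_const, nsmul_eq_mul]
    _ ≤ ∑ k ∈ range (Fintype.card α + 1), q ^ k := by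
        gcongr with k
        calc (#{σ : Perm α | σ.transpositionLength = k} : ℝ) * t ^ k
            ≤ (#{τ : Perm α | τ.IsSwap} : ℝ) ^ k * t ^ k := by
              gcongr; exact_mod_cast card_transpositionLength_eq_le k
          _ = (#{τ : Perm α | τ.IsSwap} * t) ^ k := (mul_pow ..).symm
          _ ≤ q ^ k := by gcongr
    _ ≤ (1 - q)⁻¹ := by
        have := geom_sum_Ico_le_of_lt_one (m := 0) (n := Fintype.card α + 1) hq0 hq1
        rwa [← range_eq_Ico, pow_zero, one_div] at this

end Equiv.Perm

theorem NormedRing.norm_inverse_one_sub_sub_one_le {R : Type*} [NormedRing R]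
    [HasSummableGeomSeries R] {x : R} (h : ‖x‖ < 1) :
    ‖Ring.inverse (1 - x) - 1‖ ≤ (1 - ‖x‖)⁻¹ - 1 := by
  rw [← geom_series_eq_inverse x h, ← geom_series_succ x h]
  refine tsum_of_norm_bounded ?_ fun n => norm_pow_le' x n.succ_pos
  simpa using (hasSum_nat_add_iff' 1).mpr (hasSum_geometric_of_lt_one (norm_nonneg x) h)

namespace Matrix

section LinftyOp

attribute [local instance] Matrix.linftyOpSeminormedAddCommGroup
  Matrix.linftyOpNormedAddCommGroup Matrix.linftyOpNormedRing Matrix.linftyOpNormedSpace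

variable {m n α : Type*} [Fintype m] [Fintype n]

/-- Completeness for the uniformity of the local ℓ^∞ operator norm, which instance search does
not find on its own; it provides `HasSummableGeomSeries` (Neumann series) for that norm. -/
theorem linftyOp_completeSpace :
    @CompleteSpace (Matrix n n ℝ) PseudoMetricSpace.toUniformSpace :=
  FiniteDimensional.complete ℝ _

theorem norm_apply_le_linfty_opNorm [SeminormedAddCommGroup α] (A : Matrix m n α)
    (i : m) (j : n) : ‖A i j‖ ≤ ‖A‖ := by
  change ‖A i j‖₊ ≤ ‖A‖₊
  rw [linfty_opNNNorm_def]
  exact (single_le_sum (f := fun k => ‖A i k‖₊) (fun _ _ => zero_le) (mem_univ j)).trans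
    (le_sup (f := fun i => ∑ k, ‖A i k‖₊) (mem_univ i))

theorem linfty_opNorm_le_of_sum_norm_le [SeminormedAddCommGroup α] (A : Matrix m n α)
    {b : ℝ} (hb : 0 ≤ b) (h : ∀ i, ∑ j, ‖A i j‖ ≤ b) : ‖A‖ ≤ b := by
  lift b to NNReal using hb
  change ‖A‖₊ ≤ b
  rw [linfty_opNNNorm_def]
  exact Finset.sup_le fun i _ => by rw [← NNReal.coe_le_coe]; push_cast; exact h i

theorem linfty_opNorm_of_mul_inv_le {G : Type*} [Group G] [Fintype G]
    [SeminormedAddCommGroup α] (f : G → α) :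
    ‖of fun σ τ : G => f (σ * τ⁻¹)‖ ≤ ∑ π, ‖f π‖ :=
  linfty_opNorm_le_of_sum_norm_le _ (by positivity) fun σ => by
    simp only [of_apply, ← div_eq_mul_inv]
    exact ((Equiv.divLeft σ).sum_comp fun π => ‖f π‖).le

end LinftyOp

end Matrix

section Weingarten

open Equiv Matrix

attribute [local instance] Matrix.linftyOpNormedAddCommGroup Matrix.linftyOpNormedRing
  linftyOp_completeSpace

theorem cycleCount_add_transpositionLength {m : ℕ} (σ : Perm (Fin m)) :
    cycleCount σ + σ.transpositionLength = m := by
  have hfix : #{x | σ x = x} + #σ.support = m := by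
    simpa [Perm.support] using card_filter_add_card_filter_not (s := univ) (fun x => σ x = x)
  have hcycles : Multiset.card σ.cycleType ≤ #σ.support := by
    rw [← Perm.sum_cycleType]
    simpa using
      Multiset.card_nsmul_le_sum (a := 1) fun n hn => (Perm.one_lt_of_mem_cycleType hn).le
  unfold cycleCount Perm.transpositionLength
  omega

theorem inv_pow_smul_gramMatrix {d m : ℕ} (hd : d ≠ 0) :
    ((d : ℝ) ^ m)⁻¹ • gramMatrix d m =
      of fun σ τ => ((d : ℝ)⁻¹) ^ (σ * τ⁻¹).transpositionLength := by
  ext σ τ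
  have hm : (d : ℝ) ^ m = d ^ cycleCount (σ * τ⁻¹) * d ^ (σ * τ⁻¹).transpositionLength := by
    rw [← pow_add, cycleCount_add_transpositionLength]
  rw [Matrix.smul_apply, smul_eq_mul, gramMatrix, of_apply, hm, inv_pow]
  field_simp

open scoped Classical in
theorem norm_one_sub_inv_pow_smul_gramMatrix_le {d m : ℕ} {q : ℝ} (hd : d ≠ 0)
    (hq : (m : ℝ) ^ 2 / (2 * d) ≤ q) (hq1 : q < 1) :
    ‖1 - ((d : ℝ) ^ m)⁻¹ • gramMatrix d m‖ ≤ (1 - q)⁻¹ - 1 := by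
  set t : ℝ := (d : ℝ)⁻¹ with ht
  let δ : Perm (Fin m) → ℝ := fun π => if π = 1 then 1 else 0
  have hconv : 1 - ((d : ℝ) ^ m)⁻¹ • gramMatrix d m =
      of fun σ τ => δ (σ * τ⁻¹) - t ^ (σ * τ⁻¹).transpositionLength := by
    rw [inv_pow_smul_gramMatrix hd]
    ext σ τ
    simp [δ, t, one_apply, mul_inv_eq_one, inv_pow]
  have habs (π : Perm (Fin m)) :
      ‖δ π - t ^ π.transpositionLength‖ = t ^ π.transpositionLength - δ π := by
    by_cases hπ : π = 1
    · simp [δ, hπ, Perm.transpositionLength]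
    · simp [δ, hπ, t]
  have hswaps : #{τ : Perm (Fin m) | τ.IsSwap} * t ≤ q := by
    rw [Perm.card_isSwap, Fintype.card_fin, Nat.cast_choose_two]
    calc (m * (m - 1) / 2 : ℝ) * t ≤ m ^ 2 / 2 * t := by gcongr; nlinarith
      _ = m ^ 2 / (2 * d) := by rw [ht]; ring
      _ ≤ q := hq
  calc ‖1 - ((d : ℝ) ^ m)⁻¹ • gramMatrix d m‖
      ≤ ∑ π : Perm (Fin m), ‖δ π - t ^ π.transpositionLength‖ := by
        rw [hconv]; exact linfty_opNorm_of_mul_inv_le fun π => δ π - t ^ π.transpositionLength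
    _ = ∑ π : Perm (Fin m), t ^ π.transpositionLength - 1 := by
        simp only [habs, sum_sub_distrib, δ, sum_ite_eq', mem_univ, if_true]
    _ ≤ (1 - q)⁻¹ - 1 := by
        gcongr
        exact Perm.sum_pow_transpositionLength_le (by positivity) hswaps hq1

theorem abs_pow_mul_weingarten_apply_self_sub_one_le {d m : ℕ} (hd : d ≠ 0)
    (hdm : 2 * m ^ 2 ≤ d) (σ : Perm (Fin m)) :
    |(d : ℝ) ^ m * weingarten d m σ σ - 1| ≤ (m : ℝ) ^ 2 / d := by
  set q : ℝ := (m : ℝ) ^ 2 / (2 * d) with hq_def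
  have hq0 : 0 ≤ q := by positivity
  have hq : q ≤ 1 / 4 := by
    rw [hq_def, div_le_iff₀ (by positivity)]
    have : (2 * m ^ 2 : ℝ) ≤ d := by exact_mod_cast hdm
    linarith
  set A := ((d : ℝ) ^ m)⁻¹ • gramMatrix d m
  have hN : ‖1 - A‖ ≤ (1 - q)⁻¹ - 1 :=
    norm_one_sub_inv_pow_smul_gramMatrix_le hd le_rfl (by linarith)
  have hr : (1 - q)⁻¹ - 1 ≤ 1 / 3 := by
    rw [sub_le_iff_le_add, inv_le_comm₀ (by linarith) (by norm_num)]
    linarith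
  have hN1 : ‖1 - A‖ < 1 := by linarith
  have hunit : IsUnit A.det := by
    rw [← isUnit_iff_isUnit_det, ← sub_sub_cancel 1 A]
    exact isUnit_one_sub_of_norm_lt_one hN1
  have hW : weingarten d m = ((d : ℝ) ^ m)⁻¹ • A⁻¹ := by
    refine inv_eq_right_inv ?_
    rw [Matrix.mul_smul, ← Matrix.smul_mul, mul_nonsing_inv _ hunit]
  have hdiag :
      (d : ℝ) ^ m * weingarten d m σ σ - 1 = (Ring.inverse (1 - (1 - A)) - 1) σ σ := by
    rw [hW, sub_sub_cancel, ← nonsing_inv_eq_ringInverse, Matrix.smul_apply, smul_eq_mul,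
      mul_inv_cancel_left₀ (by positivity), Matrix.sub_apply, one_apply_eq]
  calc |(d : ℝ) ^ m * weingarten d m σ σ - 1|
      ≤ ‖Ring.inverse (1 - (1 - A)) - 1‖ := by
        rw [hdiag]; exact norm_apply_le_linfty_opNorm (Ring.inverse (1 - (1 - A)) - 1) σ σ
    _ ≤ (1 - ‖1 - A‖)⁻¹ - 1 := NormedRing.norm_inverse_one_sub_sub_one_le hN1
    _ ≤ (1 - ((1 - q)⁻¹ - 1))⁻¹ - 1 := by gcongr; linarith
    _ ≤ 2 * q := by
      have h1q : (0 : ℝ) < 1 - q := by linarith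
      rw [show 1 - ((1 - q)⁻¹ - 1) = (1 - 2 * q) / (1 - q) by field_simp; ring, inv_div,
        div_sub_one (by linarith), div_le_iff₀ (by linarith)]
      nlinarith
    _ = (m : ℝ) ^ 2 / d := by rw [hq_def]; field_simp

end Weingarten

/-- `Wg_d(e) = d^{-m} (1 + O(m²/d))`: there is a constant `C > 0` such that for all
`m ≥ 1` and `d ≥ 2m²`, `|d^m · Wg_d(e,e) − 1| ≤ C m²/d`. -/
theorem weingarten_identity_asymptotics :
    ∃ C : ℝ, 0 < C ∧ ∀ m d : ℕ, 1 ≤ m → 2 * m ^ 2 ≤ d →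
      |(d : ℝ) ^ m * weingarten d m 1 1 - 1| ≤ C * (m : ℝ) ^ 2 / (d : ℝ) := by
  refine ⟨1, one_pos, fun m d hm hdm => ?_⟩
  have hd : d ≠ 0 := by
    have := Nat.one_le_pow 2 m hm
    omega
  rw [one_mul]
  exact abs_pow_mul_weingarten_apply_self_sub_one_le hd hdm 1
end

section
/- There exists a constant C > 0 such that for all natural numbers m ≥ 1 and d with 2m² ≤ d, the total absolute Weingarten mass satisfies |∑_{β ∈ S_m} d^m · |Wg_d(e, β)| − 1| ≤ C · m²/d, where the sum ranges over all permutations β of {1,…,m} and e is the identity permutation. -/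
/-!
Write `G = d ^ m • B` with `B σ τ = d⁻¹ ^ ℓ(σ τ⁻¹)`, where `ℓ(π) = m - c(π)` is the Cayley length.
Removing one point at a time, `π ↦ (π a, (a π(a)) π)`, gives the classical identity
`∑_π x ^ ℓ(π) = ∏_{i<m} (1 + i x)`. Hence every row of `B - 1` has ℓ¹-norm
`∏_{i<m} (1 + i/d) - 1 ≤ exp t - 1 ≤ t / (1 - t) =: ε` with `t = m²/2d ≤ 1/4`, so `B` is
invertible and, in the ℓ^∞ operator norm, `‖B⁻¹ - 1‖ ≤ ε / (1 - ε) ≤ 2t = m²/d`. The row of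
`B⁻¹ = d ^ m • Wg` at the identity therefore has ℓ¹-norm within `m²/d` of `1`.
-/

open Finset

namespace Equiv.Perm

variable {α : Type*} [Fintype α] [DecidableEq α]

/-- `card α` minus the number of cycles of `σ`, fixed points included: the distance from `σ`
to `1` in the Cayley graph of `Perm α` generated by the transpositions. -/
def cayleyLength (σ : Perm α) : ℕ := #σ.support - Multiset.card σ.cycleType

theorem card_cycleType_le_card_support (σ : Perm α) :
    Multiset.card σ.cycleType ≤ #σ.support := by
  rw [← sum_cycleType]
  simpa using Multiset.card_nsmul_le_sum fun _ h => (one_lt_of_mem_cycleType h).le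

@[simp]
theorem cayleyLength_one : cayleyLength (1 : Perm α) = 0 := by
  simp [cayleyLength]

theorem Disjoint.cayleyLength_mul {σ τ : Perm α} (h : Disjoint σ τ) :
    cayleyLength (σ * τ) = cayleyLength σ + cayleyLength τ := by
  have hσ := card_cycleType_le_card_support σ
  have hτ := card_cycleType_le_card_support τ
  rw [cayleyLength, cayleyLength, cayleyLength, h.card_support_mul, h.cycleType_mul,
    Multiset.card_add]
  omega

theorem IsCycle.cayleyLength {c : Perm α} (hc : IsCycle c) :
    c.cayleyLength = #c.support - 1 := by
  rw [Perm.cayleyLength, hc.cycleType, Multiset.card_singleton]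

theorem IsCycle.cayleyLength_swap_mul {c : Perm α} (hc : IsCycle c) {x : α} (hx : c x ≠ x) :
    Perm.cayleyLength (swap x (c x) * c) + 1 = Perm.cayleyLength c := by
  by_cases hcx : c (c x) = x
  · rw [hc.eq_swap_of_apply_apply_eq_self hx hcx, swap_apply_left, swap_mul_self,
      cayleyLength_one, (isCycle_swap hx.symm).cayleyLength, card_support_swap hx.symm]
  · have hsc := hc.swap_mul hx hcx
    have hx_mem : x ∈ c.support := mem_support.mpr hx
    have h2 := hsc.two_le_card_support
    rw [hsc.cayleyLength, hc.cayleyLength, support_swap_mul_eq c x hcx,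
      card_sdiff_of_subset (singleton_subset_iff.mpr hx_mem), card_singleton] at *
    omega

theorem cayleyLength_swap_mul {f : Perm α} {x : α} (hx : f x ≠ x) :
    cayleyLength (swap x (f x) * f) + 1 = cayleyLength f := by
  set c := f.cycleOf x
  have hc : c ∈ f.cycleFactorsFinset :=
    cycleOf_mem_cycleFactorsFinset_iff.mpr (mem_support.mpr hx)
  have hdisj : Disjoint (f * c⁻¹) c := disjoint_mul_inv_of_mem_cycleFactorsFinset hc
  have hfc : f x = c x := (cycleOf_apply_self f x).symm
  have hdecomp : swap x (f x) * f = (swap x (c x) * c) * (f * c⁻¹) := by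
    rw [hfc, mul_assoc, hdisj.symm.commute.eq, inv_mul_cancel_right]
  have hdisj_swap : Disjoint (swap x (c x) * c) (f * c⁻¹) :=
    hdisj.symm.mono (fun y hy => (mem_support_swap_mul_imp_mem_support_ne hy).1) le_rfl
  have hc_cycle : IsCycle c := isCycle_cycleOf f hx
  have hsplit := hc_cycle.cayleyLength_swap_mul (x := x) (by rwa [← hfc])
  conv_rhs => rw [← inv_mul_cancel_right f c, hdisj.cayleyLength_mul]
  rw [hdecomp, hdisj_swap.cayleyLength_mul]
  omega

theorem cayleyLength_swap_mul_of_apply_eq_self {τ : Perm α} {a b : α} (hτ : τ a = a)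
    (hb : b ≠ a) : cayleyLength (swap a b * τ) = cayleyLength τ + 1 := by
  have hfa : (swap a b * τ) a = b := by rw [mul_apply, hτ, swap_apply_left]
  have h := cayleyLength_swap_mul (f := swap a b * τ) (x := a) (by rwa [hfa])
  rwa [hfa, swap_mul_self_mul, eq_comm] at h

theorem sum_pow_cayleyLength_of_support_subset {R : Type*} [CommSemiring R] (x : R)
    (s : Finset α) :
    ∑ σ ∈ univ.filter (fun σ : Perm α => σ.support ⊆ s), x ^ σ.cayleyLength
      = ∏ i ∈ range #s, (1 + i * x) := by
  induction s using Finset.induction_on with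
  | empty =>
    have : univ.filter (fun σ : Perm α => σ.support ⊆ ∅) = {1} := by
      ext σ; simp [subset_empty]
    rw [this, sum_singleton, cayleyLength_one, pow_zero, card_empty, range_zero, prod_empty]
  | insert a s ha ih =>
    set P := univ.filter (fun σ : Perm α => σ.support ⊆ s)
    have hfix : ∀ τ ∈ P, τ a = a := fun τ hτ =>
      notMem_support.mp fun h => ha ((mem_filter.mp hτ).2 h)
    have hsplit : ∑ σ ∈ univ.filter (fun σ : Perm α => σ.support ⊆ insert a s),
        x ^ σ.cayleyLength = ∑ p ∈ insert a s ×ˢ P, x ^ (swap a p.1 * p.2).cayleyLength := by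
      refine sum_nbij' (fun σ => (σ a, swap a (σ a) * σ)) (fun p => swap a p.1 * p.2)
        ?_ ?_ ?_ ?_ ?_
      · intro σ hσ
        simp only [mem_filter, mem_univ, true_and] at hσ
        simp only [mem_product, P, mem_filter, mem_univ, true_and]
        refine ⟨?_, fun y hy => ?_⟩
        · by_cases h : σ a = a
          · rw [h]; exact mem_insert_self a s
          · exact hσ (apply_mem_support.mpr (mem_support.mpr h))
        · obtain ⟨hyσ, hya⟩ := mem_support_swap_mul_imp_mem_support_ne hy
          exact (mem_insert.mp (hσ hyσ)).resolve_left hya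
      · rintro ⟨b, τ⟩ hp
        rw [mem_product] at hp
        simp only [mem_filter, mem_univ, true_and]
        intro y hy
        by_contra hys
        have hya : y ≠ a := fun h => hys (h ▸ mem_insert_self a s)
        have hyb : y ≠ b := fun h => hys (h ▸ hp.1)
        have hτy : τ y = y := notMem_support.mp fun h =>
          hys (mem_insert_of_mem ((mem_filter.mp hp.2).2 h))
        exact mem_support.mp hy (by rw [mul_apply, hτy, swap_apply_of_ne_of_ne hya hyb])
      · intro σ _
        exact swap_mul_self_mul a (σ a) σ
      · rintro ⟨b, τ⟩ hp
        rw [mem_product] at hp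
        have hb : (swap a b * τ) a = b := by rw [mul_apply, hfix τ hp.2, swap_apply_left]
        simp [hb]
      · intro σ _
        simp
    have hterm : ∀ b ∈ s, ∀ τ ∈ P, x ^ (swap a b * τ).cayleyLength = x * x ^ τ.cayleyLength :=
      fun b hb τ hτ => by
        rw [cayleyLength_swap_mul_of_apply_eq_self (hfix τ hτ) (ne_of_mem_of_not_mem hb ha),
          pow_succ, mul_comm]
    rw [hsplit, sum_product, sum_insert ha, card_insert_of_notMem ha, prod_range_succ, ← ih,
      sum_congr rfl fun b hb => sum_congr rfl (hterm b hb)]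
    simp only [swap_self, one_def.symm, one_mul, ← mul_sum, sum_const, nsmul_eq_mul]
    ring

theorem sum_pow_cayleyLength {R : Type*} [CommSemiring R] (x : R) :
    ∑ σ : Perm α, x ^ σ.cayleyLength = ∏ i ∈ range (Fintype.card α), (1 + i * x) := by
  simpa using sum_pow_cayleyLength_of_support_subset x (univ : Finset α)

end Equiv.Perm

theorem norm_sub_one_le_of_mul_eq_one {R : Type*} [SeminormedRing R] [NormOneClass R]
    {b w : R} {ε : ℝ} (hbw : b * w = 1) (hb : ‖b - 1‖ ≤ ε) (hε : ε < 1) :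
    ‖w - 1‖ ≤ ε / (1 - ε) := by
  have hw : w - 1 = -((b - 1) * w) := by rw [sub_mul, hbw, one_mul, neg_sub]
  have hle : ‖w - 1‖ ≤ ε * (‖w - 1‖ + 1) := calc
    ‖w - 1‖ = ‖(b - 1) * w‖ := by rw [hw, norm_neg]
    _ ≤ ‖b - 1‖ * ‖w‖ := norm_mul_le _ _
    _ ≤ ε * (‖w - 1‖ + 1) := by
      gcongr
      · exact (norm_nonneg _).trans hb
      · simpa using norm_add_le (w - 1) 1
  rw [le_div_iff₀ (sub_pos.mpr hε)]
  linarith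

namespace Matrix

attribute [local instance] Matrix.linftyOpSeminormedAddCommGroup

theorem sum_norm_row_le_linfty_opNorm {l n α : Type*} [Fintype l] [Fintype n]
    [SeminormedAddCommGroup α] (A : Matrix l n α) (i : l) : ∑ j, ‖A i j‖ ≤ ‖A‖ := by
  rw [linfty_opNorm_def]
  simpa [NNReal.coe_sum] using
    NNReal.coe_le_coe.mpr (le_sup (f := fun i => ∑ j, ‖A i j‖₊) (mem_univ i))

theorem linfty_opNorm_le_of_sum_norm_row_le {l n α : Type*} [Fintype l] [Fintype n]
    [SeminormedAddCommGroup α] {A : Matrix l n α} {ε : ℝ} (hε : 0 ≤ ε)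
    (h : ∀ i, ∑ j, ‖A i j‖ ≤ ε) : ‖A‖ ≤ ε := by
  rw [linfty_opNorm_def, ← NNReal.coe_mk ε hε, NNReal.coe_le_coe, Finset.sup_le_iff]
  intro i _
  rw [← NNReal.coe_le_coe]
  simpa [NNReal.coe_sum] using h i

theorem isUnit_of_linfty_opNorm_sub_one_lt_one {n 𝕜 : Type*} [Fintype n] [DecidableEq n]
    [NormedField 𝕜] {A : Matrix n n 𝕜} (h : ‖A - 1‖ < 1) : IsUnit A := by
  rw [isUnit_iff_isUnit_det, isUnit_iff_ne_zero]
  intro hdet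
  obtain ⟨v, hv, hAv⟩ := exists_mulVec_eq_zero_iff.mpr hdet
  have hfix : (1 - A) *ᵥ v = v := by rw [sub_mulVec, hAv, one_mulVec, sub_zero]
  have hle := linfty_opNorm_mulVec (1 - A) v
  rw [hfix, norm_sub_rev] at hle
  have hv0 : 0 < ‖v‖ := norm_pos_iff.mpr hv
  nlinarith

end Matrix

theorem prod_one_add_le_one_div_one_sub_sum {ι : Type*} (s : Finset ι) {f : ι → ℝ}
    (hf : ∀ i, 0 ≤ f i) (hs : ∑ i ∈ s, f i < 1) :
    ∏ i ∈ s, (1 + f i) ≤ 1 / (1 - ∑ i ∈ s, f i) :=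
  (Real.prod_one_add_le_exp_sum s hf).trans
    (Real.exp_bound_div_one_sub_of_interval (sum_nonneg fun i _ => hf i) hs)

theorem sum_range_mul_le_sq_div_two (m : ℕ) {y : ℝ} (hy : 0 ≤ y) :
    ∑ i ∈ range m, (i : ℝ) * y ≤ m ^ 2 / 2 * y := by
  have hgauss : ((∑ i ∈ range m, i : ℕ) : ℝ) * 2 = m * (m - 1 : ℕ) := by
    exact_mod_cast sum_range_id_mul_two m
  rw [← sum_mul]
  gcongr
  rcases Nat.eq_zero_or_pos m with rfl | hm
  · simp
  · push_cast [Nat.cast_sum, Nat.cast_sub hm] at hgauss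
    nlinarith

theorem abs_sum_abs_sub_sum_abs_le {ι : Type*} (s : Finset ι) (f g : ι → ℝ) :
    |(∑ i ∈ s, |f i|) - (∑ i ∈ s, |g i|)| ≤ ∑ i ∈ s, |f i - g i| := by
  rw [← sum_sub_distrib]
  exact (abs_sum_le_sum_abs _ _).trans (sum_le_sum fun i _ => abs_abs_sub_abs_le_abs_sub _ _)

theorem cycleCount_add_cayleyLength {m : ℕ} (σ : Equiv.Perm (Fin m)) :
    cycleCount σ + σ.cayleyLength = m := by
  have hfix : (univ.filter fun x => σ x = x) = σ.supportᶜ := by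
    ext x; simp [Equiv.Perm.mem_support]
  have hsupp : #σ.support ≤ m := by simpa using card_le_univ σ.support
  have := σ.card_cycleType_le_card_support
  rw [cycleCount, hfix, card_compl, Fintype.card_fin, Equiv.Perm.cayleyLength]
  omega

noncomputable def normalizedGram (d m : ℕ) :
    Matrix (Equiv.Perm (Fin m)) (Equiv.Perm (Fin m)) ℝ :=
  Matrix.of fun σ τ => (d : ℝ)⁻¹ ^ (σ * τ⁻¹).cayleyLength

theorem gramMatrix_eq_smul_normalizedGram {d m : ℕ} (hd : d ≠ 0) :
    gramMatrix d m = ((d : ℝ) ^ m) • normalizedGram d m := by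
  ext σ τ
  have hdR : (d : ℝ) ≠ 0 := Nat.cast_ne_zero.mpr hd
  have hdm : (d : ℝ) ^ m
      = (d : ℝ) ^ cycleCount (σ * τ⁻¹) * (d : ℝ) ^ (σ * τ⁻¹).cayleyLength := by
    rw [← pow_add, cycleCount_add_cayleyLength]
  rw [gramMatrix, Matrix.smul_apply, normalizedGram, Matrix.of_apply, smul_eq_mul, hdm,
    mul_assoc, ← mul_pow, mul_inv_cancel₀ hdR, one_pow, mul_one]

theorem weingarten_eq_smul_inv_normalizedGram {d m : ℕ} (hd : d ≠ 0)
    (hB : IsUnit (normalizedGram d m)) :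
    weingarten d m = ((d : ℝ) ^ m)⁻¹ • (normalizedGram d m)⁻¹ := by
  have hdm : (d : ℝ) ^ m ≠ 0 := pow_ne_zero _ (Nat.cast_ne_zero.mpr hd)
  rw [weingarten, gramMatrix_eq_smul_normalizedGram hd]
  exact Matrix.inv_smul' _ (Units.mk0 _ hdm) ((Matrix.isUnit_iff_isUnit_det _).mp hB)

theorem sum_abs_normalizedGram_sub_one_row (d m : ℕ) (σ : Equiv.Perm (Fin m)) :
    ∑ τ, |(normalizedGram d m - 1) σ τ| = ∏ i ∈ range m, (1 + i * (d : ℝ)⁻¹) - 1 := by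
  set g : Equiv.Perm (Fin m) → ℝ := fun π => (d : ℝ)⁻¹ ^ π.cayleyLength - if π = 1 then 1 else 0
  have hg : ∀ π, |g π| = g π := by
    intro π
    refine abs_of_nonneg ?_
    by_cases hπ : π = 1
    · simp [g, hπ]
    · simp only [g, hπ, if_false, sub_zero]; positivity
  have hentry : ∀ τ, (normalizedGram d m - 1) σ τ = g (σ / τ) := by
    intro τ
    simp [normalizedGram, g, Matrix.one_apply, div_eq_mul_inv, mul_inv_eq_one]
  rw [Fintype.sum_equiv (Equiv.divLeft σ) _ (fun π => |g π|) fun τ => by rw [hentry]; rfl]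
  simp only [hg, g, sum_sub_distrib, sum_ite_eq', mem_univ, if_true,
    Equiv.Perm.sum_pow_cayleyLength, Fintype.card_fin]

section

attribute [local instance] Matrix.linftyOpNormedRing

theorem norm_normalizedGram_sub_one_le {d m : ℕ} (ht : (m : ℝ) ^ 2 / (2 * d) < 1) :
    ‖normalizedGram d m - 1‖ ≤ (m : ℝ) ^ 2 / (2 * d) / (1 - (m : ℝ) ^ 2 / (2 * d)) := by
  set t := (m : ℝ) ^ 2 / (2 * d) with ht_def
  have h1t : 0 < 1 - t := by linarith
  have hsum : ∑ i ∈ range m, (i : ℝ) * (d : ℝ)⁻¹ ≤ t :=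
    (sum_range_mul_le_sq_div_two m (inv_nonneg.mpr (Nat.cast_nonneg d))).trans_eq
      (by rw [ht_def]; ring)
  have hprod : ∏ i ∈ range m, (1 + i * (d : ℝ)⁻¹) ≤ 1 / (1 - t) :=
    (prod_one_add_le_one_div_one_sub_sum _ (fun i => by positivity) (hsum.trans_lt ht)).trans
      (one_div_le_one_div_of_le h1t (by linarith))
  have hrow : ∀ σ, ∑ τ, ‖(normalizedGram d m - 1) σ τ‖ ≤ t / (1 - t) := fun σ => by
    rw [show t / (1 - t) = 1 / (1 - t) - 1 by field_simp; ring]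
    simpa only [Real.norm_eq_abs, sum_abs_normalizedGram_sub_one_row] using by linarith
  exact Matrix.linfty_opNorm_le_of_sum_norm_row_le
    (div_nonneg (by positivity) h1t.le) hrow

theorem abs_sum_weingarten_sub_one_le {m d : ℕ} (hd0 : 0 < d) (hd : 2 * m ^ 2 ≤ d) :
    |(∑ β : Equiv.Perm (Fin m), (d : ℝ) ^ m * |weingarten d m 1 β|) - 1|
      ≤ (m : ℝ) ^ 2 / d := by
  set t := (m : ℝ) ^ 2 / (2 * d) with ht_def
  have ht : t ≤ 1 / 4 := by
    have : (2 : ℝ) * m ^ 2 ≤ d := by exact_mod_cast hd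
    rw [ht_def, div_le_iff₀ (by positivity)]
    linarith
  have ht0 : 0 ≤ t := by positivity
  set B := normalizedGram d m
  have hB : ‖B - 1‖ ≤ t / (1 - t) := norm_normalizedGram_sub_one_le (by linarith)
  have hε : t / (1 - t) < 1 := by rw [div_lt_one (by linarith)]; linarith
  have hunit : IsUnit B := Matrix.isUnit_of_linfty_opNorm_sub_one_lt_one (hB.trans_lt hε)
  have hW := norm_sub_one_le_of_mul_eq_one
    (Matrix.mul_nonsing_inv B ((Matrix.isUnit_iff_isUnit_det B).mp hunit)) hB hε
  have hterm : ∀ β, (d : ℝ) ^ m * |weingarten d m 1 β| = |B⁻¹ 1 β| := fun β => by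
    rw [weingarten_eq_smul_inv_normalizedGram hd0.ne' hunit, Matrix.smul_apply, smul_eq_mul,
      abs_mul, abs_inv, abs_of_pos (by positivity), mul_inv_cancel_left₀ (by positivity)]
  have hone : ∑ β, |(1 : Matrix (Equiv.Perm (Fin m)) (Equiv.Perm (Fin m)) ℝ) 1 β| = 1 := by
    simp [Matrix.one_apply, apply_ite (abs : ℝ → ℝ)]
  calc _ = |(∑ β, |B⁻¹ 1 β|) - (∑ β, |(1 : Matrix _ _ ℝ) 1 β|)| := by simp_rw [hterm, hone]
    _ ≤ ∑ β, |(B⁻¹ - 1) 1 β| := abs_sum_abs_sub_sum_abs_le _ _ _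
    _ ≤ ‖B⁻¹ - 1‖ := by
      simp_rw [← Real.norm_eq_abs]
      exact Matrix.sum_norm_row_le_linfty_opNorm (B⁻¹ - 1) 1
    _ ≤ t / (1 - t) / (1 - t / (1 - t)) := hW
    _ = t / (1 - 2 * t) := by
      have h1 : 1 - t ≠ 0 := by linarith
      rw [one_sub_div h1, div_div_div_cancel_right₀ h1]
      ring_nf
    _ ≤ 2 * t := by rw [div_le_iff₀ (by linarith)]; nlinarith
    _ = (m : ℝ) ^ 2 / d := by rw [ht_def]; field_simp

end

/-- Total absolute Weingarten mass: there is a constant `C > 0` such that for all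
`m ≥ 1` and `d ≥ 2m²`, `|∑_{β ∈ S_m} d^m |Wg_d(e,β)| − 1| ≤ C m²/d`. -/
theorem weingarten_abs_sum :
    ∃ C : ℝ, 0 < C ∧ ∀ m d : ℕ, 1 ≤ m → 2 * m ^ 2 ≤ d →
      |(∑ β : Equiv.Perm (Fin m), (d : ℝ) ^ m * |weingarten d m 1 β|) - 1|
        ≤ C * (m : ℝ) ^ 2 / (d : ℝ) :=
  ⟨1, one_pos, fun m _ hm hd => by
    simpa using abs_sum_weingarten_sub_one_le ((Nat.mul_pos two_pos (pow_pos hm 2)).trans_le hd) hd⟩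
end

section
/- Let q ≥ 1 and m ≥ 1 be natural numbers and let μ be the uniform (rotation-invariant) probability measure on the unit sphere of ℂ^q. Then the m-th moment operator of the Haar-random state ensemble equals ((q-1)!/(q+m-1)!) times the sum of all replica permutation matrices: entrywise, for all f, g : Fin m → Fin q, ∫ ∏_{k=1}^{m} ψ(f(k)) · conj(ψ(g(k))) dμ(ψ) = ((q-1)!/(q+m-1)!) · #{σ ∈ S_m : ∀ k, f(k) = g(σ(k))}. -/
/-!
Write `J(a, b) = ∫ ψ^a ψ̄^b dμ` for multi-indices `a b : ι → ℕ`, and `J(c) = J(c, c)`; the moment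
in question is `J(a, b)` with `a`, `b` the fibre sizes of `f` and `g`. Invariance under a diagonal
unitary with one entry `z` multiplies `J(a, b)` by `z^(a j) z̄^(b j)`, so `J(a, b) = 0` unless
`a = b`. Invariance under a real rotation in the `(i, j)`-plane, expanded binomially, makes
`(n choose p) J(c + p eᵢ + (n - p) eⱼ)` independent of `p`, whence
`(cᵢ + 1) J(c + eⱼ) = (cⱼ + 1) J(c + eᵢ)`. Together with `∑ᵢ J(c + eᵢ) = J(c)`, which is
`‖ψ‖ = 1`, this gives `(q + |c|) J(c + eⱼ) = (cⱼ + 1) J(c)`, and by induction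
`J(c) = (q - 1)! ∏ₖ cₖ! / (q + |c| - 1)!`. Finally, a permutation `σ` with `f = g ∘ σ` is the
same as a family of bijections between the fibres of `f` and of `g`, so there are `∏ₖ aₖ!` of
them if the fibre sizes agree and none otherwise.
-/

open MeasureTheory Finset

namespace SphereMoments

variable {ι : Type*}

section Matrices

variable [DecidableEq ι]

def planeRotation (i j : ι) (α β : ℝ) : Matrix ι ι ℂ :=
  ((1 : Matrix ι ι ℂ).updateRow i ((α : ℂ) • Pi.single i 1 + (β : ℂ) • Pi.single j 1)).updateRow j
    ((-β : ℂ) • Pi.single i 1 + (α : ℂ) • Pi.single j 1)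

lemma planeRotation_row {i j : ι} (hij : i ≠ j) (α β : ℝ) (x : ι) :
    planeRotation i j α β x =
      if x = i then (α : ℂ) • Pi.single i 1 + (β : ℂ) • Pi.single j 1
      else if x = j then (-β : ℂ) • Pi.single i 1 + (α : ℂ) • Pi.single j 1
      else Pi.single x 1 := by
  unfold planeRotation
  split_ifs with hi hj
  · rw [Matrix.updateRow_ne (hi ▸ hij), hi, Matrix.updateRow_self]
  · rw [hj, Matrix.updateRow_self]
  · rw [Matrix.updateRow_ne hj, Matrix.updateRow_ne hi]
    exact funext fun _ => Matrix.one_eq_pi_single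

variable [Fintype ι]

lemma planeRotation_mem_unitaryGroup {i j : ι} (hij : i ≠ j) {α β : ℝ} (h : α ^ 2 + β ^ 2 = 1) :
    planeRotation i j α β ∈ Matrix.unitaryGroup ι ℂ := by
  have h' : (α : ℂ) ^ 2 + (β : ℂ) ^ 2 = 1 := by exact_mod_cast h
  rw [Matrix.mem_unitaryGroup_iff]
  ext x y
  rw [Matrix.mul_apply', Matrix.one_apply]
  change planeRotation i j α β x ⬝ᵥ star (planeRotation i j α β y) = _
  simp only [planeRotation_row hij]
  split_ifs <;> subst_vars <;> simp_all [dotProduct_add] <;> grind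

lemma planeRotation_mulVec_apply_left {i j : ι} (hij : i ≠ j) (α β : ℝ) (ψ : ι → ℂ) :
    (planeRotation i j α β).mulVec ψ i = α * ψ i + β * ψ j := by
  change planeRotation i j α β i ⬝ᵥ ψ = _
  simp [planeRotation_row hij, add_dotProduct]

lemma planeRotation_mulVec_apply_of_ne {i j k : ι} (hij : i ≠ j) (hki : k ≠ i) (hkj : k ≠ j)
    (α β : ℝ) (ψ : ι → ℂ) : (planeRotation i j α β).mulVec ψ k = ψ k := by
  change planeRotation i j α β k ⬝ᵥ ψ = _
  simp [planeRotation_row hij, hki, hkj]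

lemma diagonal_mem_unitaryGroup {d : ι → ℂ} (hd : ∀ k, ‖d k‖ = 1) :
    Matrix.diagonal d ∈ Matrix.unitaryGroup ι ℂ := by
  rw [Matrix.mem_unitaryGroup_iff, Matrix.star_eq_conjTranspose, Matrix.diagonal_conjTranspose,
    Matrix.diagonal_mul_diagonal, ← Matrix.diagonal_one]
  congr 1
  funext k
  simp [Complex.mul_conj, Complex.normSq_eq_norm_sq, hd k]

end Matrices

section Monomials

variable [Fintype ι]

def mixedMonomial (a b : ι → ℕ) (ψ : ι → ℂ) : ℂ :=
  ∏ i, ψ i ^ a i * (starRingEnd ℂ) (ψ i) ^ b i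

lemma mixedMonomial_zero (ψ : ι → ℂ) : mixedMonomial 0 0 ψ = 1 := by
  simp [mixedMonomial]

lemma mixedMonomial_add (a b a' b' : ι → ℕ) (ψ : ι → ℂ) :
    mixedMonomial (a + a') (b + b') ψ = mixedMonomial a b ψ * mixedMonomial a' b' ψ := by
  simp only [mixedMonomial, ← prod_mul_distrib, Pi.add_apply, pow_add]
  exact prod_congr rfl fun _ _ => by ring

lemma mixedMonomial_mul (a b : ι → ℕ) (d ψ : ι → ℂ) :
    mixedMonomial a b (d * ψ) = mixedMonomial a b d * mixedMonomial a b ψ := by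
  simp only [mixedMonomial, ← prod_mul_distrib, Pi.mul_apply, map_mul, mul_pow]
  exact prod_congr rfl fun _ _ => by ring

lemma mixedMonomial_congr {a b : ι → ℕ} {ψ φ : ι → ℂ}
    (h : ∀ k, ψ k = φ k ∨ a k = 0 ∧ b k = 0) :
    mixedMonomial a b ψ = mixedMonomial a b φ := by
  refine prod_congr rfl fun k _ => ?_
  rcases h k with h | ⟨ha, hb⟩ <;> simp [*]

lemma continuous_mixedMonomial (a b : ι → ℕ) : Continuous (mixedMonomial a b) := by
  unfold mixedMonomial
  fun_prop

lemma norm_mixedMonomial_le_one (a b : ι → ℕ) {ψ : ι → ℂ}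
    (hψ : ∑ i, Complex.normSq (ψ i) = 1) : ‖mixedMonomial a b ψ‖ ≤ 1 := by
  have hle : ∀ i, ‖ψ i‖ ≤ 1 := fun i => by
    have : Complex.normSq (ψ i) ≤ 1 :=
      hψ ▸ single_le_sum (fun j _ => Complex.normSq_nonneg (ψ j)) (mem_univ i)
    rw [Complex.normSq_eq_norm_sq] at this
    exact (sq_le_one_iff₀ (norm_nonneg _)).mp this
  rw [mixedMonomial, norm_prod]
  refine prod_le_one (fun _ _ => norm_nonneg _) fun i _ => ?_
  rw [norm_mul, norm_pow, norm_pow, Complex.norm_conj]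
  exact mul_le_one₀ (pow_le_one₀ (norm_nonneg _) (hle i)) (by positivity)
    (pow_le_one₀ (norm_nonneg _) (hle i))

lemma integrable_mixedMonomial {μ : Measure (ι → ℂ)} [IsFiniteMeasure μ]
    (hsphere : ∀ᵐ ψ ∂μ, ∑ i, Complex.normSq (ψ i) = 1) (a b : ι → ℕ) :
    Integrable (mixedMonomial a b) μ :=
  (integrable_const 1).mono' (continuous_mixedMonomial a b).aestronglyMeasurable
    (hsphere.mono fun _ => norm_mixedMonomial_le_one a b)

variable [DecidableEq ι]

lemma mixedMonomial_single (i : ι) (p r : ℕ) (ψ : ι → ℂ) :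
    mixedMonomial (Pi.single i p) (Pi.single i r) ψ = ψ i ^ p * (starRingEnd ℂ) (ψ i) ^ r := by
  rw [mixedMonomial, prod_eq_single i (fun k _ hk => by simp [hk]) (by simp)]
  simp

lemma mixedMonomial_mulSingle (a b : ι → ℕ) (j : ι) (z : ℂ) :
    mixedMonomial a b (Pi.mulSingle j z) = z ^ a j * (starRingEnd ℂ) z ^ b j := by
  rw [mixedMonomial, prod_eq_single j (fun k _ hk => by simp [hk]) (by simp)]
  simp

lemma mixedMonomial_planeRotation_mulVec {i j : ι} (hij : i ≠ j) {c : ι → ℕ} (hci : c i = 0)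
    (hcj : c j = 0) (n : ℕ) (α β : ℝ) (ψ : ι → ℂ) :
    mixedMonomial (c + Pi.single i n) (c + Pi.single i n) ((planeRotation i j α β).mulVec ψ) =
      ∑ p ∈ range (n + 1), ∑ r ∈ range (n + 1),
        (n.choose p * n.choose r * α ^ (p + r) * β ^ (n - p + (n - r)) : ℂ) *
          mixedMonomial (c + Pi.single i p + Pi.single j (n - p))
            (c + Pi.single i r + Pi.single j (n - r)) ψ := by
  have hrest : mixedMonomial c c ((planeRotation i j α β).mulVec ψ) = mixedMonomial c c ψ :=
    mixedMonomial_congr fun k => by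
      by_cases hki : k = i
      · exact Or.inr (by simp [hki, hci])
      by_cases hkj : k = j
      · exact Or.inr (by simp [hkj, hcj])
      exact Or.inl (planeRotation_mulVec_apply_of_ne hij hki hkj α β ψ)
  rw [mixedMonomial_add, hrest, mixedMonomial_single, planeRotation_mulVec_apply_left hij,
    map_add, map_mul, map_mul, Complex.conj_ofReal, Complex.conj_ofReal, add_pow, add_pow,
    sum_mul_sum, mul_sum]
  refine sum_congr rfl fun p _ => ?_
  rw [mul_sum]
  refine sum_congr rfl fun r _ => ?_
  rw [mixedMonomial_add, mixedMonomial_add, mixedMonomial_single, mixedMonomial_single]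
  ring

end Monomials

lemma eq_of_forall_nonneg_sum_mul_pow_eq {n : ℕ} {a b : ℕ → ℂ}
    (h : ∀ y : ℝ, 0 ≤ y →
      ∑ k ∈ range (n + 1), a k * (y : ℂ) ^ k = ∑ k ∈ range (n + 1), b k * (y : ℂ) ^ k)
    {p : ℕ} (hp : p ≤ n) : a p = b p := by
  open Polynomial in
  set P : ℂ[X] := ∑ k ∈ range (n + 1), C (a k - b k) * X ^ k
  have hP : P = 0 := by
    refine P.eq_zero_of_infinite_isRoot (((Set.Ici_infinite 0).image
      Complex.ofReal_injective.injOn).mono ?_)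
    rintro _ ⟨y, hy, rfl⟩
    simp only [Set.mem_ofPred_eq, IsRoot, P, eval_finsetSum, eval_mul, eval_C, eval_X_pow,
      sub_mul, sum_sub_distrib, h y hy, sub_self]
  have := congrArg (Polynomial.coeff · p) hP
  simp only [P, Polynomial.finsetSum_coeff, Polynomial.coeff_C_mul_X_pow, sum_ite_eq,
    mem_range, Nat.lt_succ_of_le hp, if_true, Polynomial.coeff_zero] at this
  exact sub_eq_zero.mp this

variable [Fintype ι] [DecidableEq ι] {μ : Measure (ι → ℂ)}

lemma exists_eq_add_single_of_sum_eq_succ {c : ι → ℕ} {n : ℕ} (h : ∑ k, c k = n + 1) :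
    ∃ (c' : ι → ℕ) (j : ι), c = c' + Pi.single j 1 := by
  obtain ⟨j, -, hj⟩ := exists_ne_zero_of_sum_ne_zero (h.trans_ne n.succ_ne_zero)
  refine ⟨Function.update c j (c j - 1), j, funext fun k => ?_⟩
  by_cases hkj : k = j <;> simp [hkj]
  omega

lemma sum_add_single (c : ι → ℕ) (j : ι) : ∑ k, (c + Pi.single j 1 : ι → ℕ) k = ∑ k, c k + 1 := by
  simp [sum_add_distrib]

lemma prod_factorial_add_single (c : ι → ℕ) (j : ι) :
    ∏ k, ((c + Pi.single j 1 : ι → ℕ) k).factorial = (c j + 1) * ∏ k, (c k).factorial := by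
  rw [← mul_prod_erase _ _ (mem_univ j), ← mul_prod_erase _ _ (mem_univ j),
    prod_congr rfl fun k hk => by rw [Pi.add_apply, Pi.single_eq_of_ne (ne_of_mem_erase hk),
      add_zero]]
  simp [Nat.factorial_succ, mul_assoc]

lemma sum_integral_mixedMonomial_add_single [IsFiniteMeasure μ]
    (hsphere : ∀ᵐ ψ ∂μ, ∑ i, Complex.normSq (ψ i) = 1) (c : ι → ℕ) :
    ∑ i, ∫ ψ, mixedMonomial (c + Pi.single i 1) (c + Pi.single i 1) ψ ∂μ =
      ∫ ψ, mixedMonomial c c ψ ∂μ := by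
  rw [← integral_finsetSum _ fun i _ => integrable_mixedMonomial hsphere _ _]
  refine integral_congr_ae (hsphere.mono fun ψ hψ => ?_)
  simp only [mixedMonomial_add, mixedMonomial_single, pow_one, Complex.mul_conj, ← mul_sum]
  rw [← Complex.ofReal_sum, hψ, Complex.ofReal_one, mul_one]

def IsUnitarilyInvariant (μ : Measure (ι → ℂ)) : Prop :=
  ∀ U : Matrix.unitaryGroup ι ℂ, μ.map (fun ψ => (U : Matrix ι ι ℂ).mulVec ψ) = μ

namespace IsUnitarilyInvariant

lemma integral_comp_mulVec (hμ : IsUnitarilyInvariant μ)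
    (U : Matrix.unitaryGroup ι ℂ) {h : (ι → ℂ) → ℂ} (hh : Continuous h) :
    ∫ ψ, h ((U : Matrix ι ι ℂ).mulVec ψ) ∂μ = ∫ ψ, h ψ ∂μ := by
  have hU : Continuous fun ψ : ι → ℂ => (U : Matrix ι ι ℂ).mulVec ψ :=
    continuous_const.matrix_mulVec continuous_id
  rw [← integral_map hU.aemeasurable (by rw [hμ U]; exact hh.aestronglyMeasurable), hμ U]

lemma integral_mixedMonomial_eq_zero (hμ : IsUnitarilyInvariant μ)
    {a b : ι → ℕ} {j : ι} (hab : a j ≠ b j) : ∫ ψ, mixedMonomial a b ψ ∂μ = 0 := by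
  set θ : ℝ := Real.pi / ((a j : ℝ) - b j)
  set z : ℂ := Complex.exp (θ * Complex.I)
  have hz : ‖z‖ = 1 := Complex.norm_exp_ofReal_mul_I θ
  have hphase : z ^ a j * (starRingEnd ℂ) z ^ b j = -1 := by
    have hθ : ((a j : ℝ) - b j) * θ = Real.pi :=
      mul_div_cancel₀ _ (sub_ne_zero.mpr (by exact_mod_cast hab))
    rw [← Complex.exp_conj, map_mul, Complex.conj_ofReal, Complex.conj_I, ← Complex.exp_nat_mul,
      ← Complex.exp_nat_mul, ← Complex.exp_add, ← Complex.exp_pi_mul_I, ← hθ]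
    push_cast
    ring_nf
  have hU := diagonal_mem_unitaryGroup (d := Pi.mulSingle j z)
    fun k => by by_cases hk : k = j <;> simp [hk, hz]
  have hflip : ∀ ψ, mixedMonomial a b ((Matrix.diagonal (Pi.mulSingle j z)).mulVec ψ)
      = -mixedMonomial a b ψ := fun ψ => by
    rw [show (Matrix.diagonal _).mulVec ψ = Pi.mulSingle j z * ψ from
      funext (Matrix.mulVec_diagonal _ ψ), mixedMonomial_mul, mixedMonomial_mulSingle, hphase,
      neg_one_mul]
  have key := hμ.integral_comp_mulVec ⟨_, hU⟩ (continuous_mixedMonomial a b)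
  rw [integral_congr_ae (ae_of_all _ hflip), integral_neg] at key
  linear_combination -key / 2

lemma integral_mixedMonomial_add_single_eq_sum [IsFiniteMeasure μ]
    (hμ : IsUnitarilyInvariant μ) (hsphere : ∀ᵐ ψ ∂μ, ∑ i, Complex.normSq (ψ i) = 1)
    {i j : ι} (hij : i ≠ j) {c : ι → ℕ} (hci : c i = 0) (hcj : c j = 0) (n : ℕ)
    {x : ℝ} (hx₀ : 0 ≤ x) (hx₁ : x ≤ 1) :
    ∫ ψ, mixedMonomial (c + Pi.single i n) (c + Pi.single i n) ψ ∂μ =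
      ∑ p ∈ range (n + 1), (n.choose p ^ 2 * x ^ p * (1 - x) ^ (n - p) : ℂ) *
        ∫ ψ, mixedMonomial (c + Pi.single i p + Pi.single j (n - p))
          (c + Pi.single i p + Pi.single j (n - p)) ψ ∂μ := by
  have hα : (√x : ℂ) ^ 2 = x := by exact_mod_cast Real.sq_sqrt hx₀
  have hβ : (√(1 - x) : ℂ) ^ 2 = 1 - x := by exact_mod_cast Real.sq_sqrt (sub_nonneg.mpr hx₁)
  have hU := planeRotation_mem_unitaryGroup hij (α := √x) (β := √(1 - x))
    (by rw [Real.sq_sqrt hx₀, Real.sq_sqrt (sub_nonneg.mpr hx₁)]; ring)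
  have hint : ∀ a b : ι → ℕ, Integrable (mixedMonomial a b) μ :=
    integrable_mixedMonomial hsphere
  rw [← hμ.integral_comp_mulVec ⟨_, hU⟩ (continuous_mixedMonomial _ _)]
  simp only [mixedMonomial_planeRotation_mulVec hij hci hcj]
  rw [integral_finsetSum _ fun p _ => integrable_finsetSum _ fun r _ => (hint _ _).const_mul _]
  refine sum_congr rfl fun p hp => ?_
  rw [integral_finsetSum _ fun r _ => (hint _ _).const_mul _, sum_eq_single p ?_ (by simp_all),
    integral_const_mul, ← two_mul, ← two_mul, pow_mul, pow_mul, hα, hβ]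
  · ring
  intro r _ hrp
  rw [integral_const_mul,
    hμ.integral_mixedMonomial_eq_zero (j := i) (by simpa [hci, hij] using hrp.symm), mul_zero]

lemma choose_mul_integral_mixedMonomial [IsFiniteMeasure μ]
    (hμ : IsUnitarilyInvariant μ) (hsphere : ∀ᵐ ψ ∂μ, ∑ i, Complex.normSq (ψ i) = 1)
    {i j : ι} (hij : i ≠ j) {c : ι → ℕ} (hci : c i = 0) (hcj : c j = 0) {n p : ℕ} (hp : p ≤ n) :
    (n.choose p : ℂ) * ∫ ψ, mixedMonomial (c + Pi.single i p + Pi.single j (n - p))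
        (c + Pi.single i p + Pi.single j (n - p)) ψ ∂μ =
      ∫ ψ, mixedMonomial (c + Pi.single i n) (c + Pi.single i n) ψ ∂μ := by
  set J : ℕ → ℂ := fun p => ∫ ψ, mixedMonomial (c + Pi.single i p + Pi.single j (n - p))
    (c + Pi.single i p + Pi.single j (n - p)) ψ ∂μ
  set K := ∫ ψ, mixedMonomial (c + Pi.single i n) (c + Pi.single i n) ψ ∂μ
  suffices (n.choose p : ℂ) * K = n.choose p ^ 2 * J p by
    have hC : (n.choose p : ℂ) ≠ 0 := by exact_mod_cast (Nat.choose_pos hp).ne'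
    exact mul_left_cancel₀ hC (by linear_combination -this)
  refine eq_of_forall_nonneg_sum_mul_pow_eq (a := fun p => n.choose p * K)
    (b := fun p => n.choose p ^ 2 * J p) (fun y hy => ?_) hp
  -- substituting `x = y / (1 + y)` turns the expansion in `x ^ q * (1 - x) ^ (n - q)` into a
  -- polynomial identity in `y`
  set x : ℝ := y / (1 + y) with hx_def
  have hy₁ : (1 + y : ℂ) ≠ 0 := by exact_mod_cast (by positivity : (1 + y : ℝ) ≠ 0)
  have hx : (x : ℂ) * (1 + y) = y := by push_cast [hx_def]; field_simp
  have hx' : (1 - (x : ℂ)) * (1 + y) = 1 := by push_cast [hx_def]; field_simp; ring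
  have hweight : ∀ q ≤ n, (x : ℂ) ^ q * (1 - x) ^ (n - q) * (y + 1) ^ n = (y : ℂ) ^ q := by
    intro q hq
    calc _ = ((x : ℂ) * (1 + y)) ^ q * ((1 - x) * (1 + y)) ^ (n - q) := by
          rw [add_comm (y : ℂ), ← pow_mul_pow_sub _ hq, mul_pow, mul_pow]; ring
      _ = _ := by rw [hx, hx', one_pow, mul_one]
  have hexp := hμ.integral_mixedMonomial_add_single_eq_sum hsphere hij hci hcj n
    (x := x) (by positivity) (div_le_one_of_le₀ (by linarith) (by positivity))
  calc ∑ q ∈ range (n + 1), (n.choose q * K) * (y : ℂ) ^ q = K * (y + 1) ^ n := by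
        rw [add_pow, mul_sum]
        exact sum_congr rfl fun q _ => by ring
    _ = ∑ q ∈ range (n + 1), (n.choose q ^ 2 * J q) * (y : ℂ) ^ q := by
        rw [show K = _ from hexp, sum_mul]
        refine sum_congr rfl fun q hq => ?_
        rw [← hweight q (Nat.lt_succ_iff.mp (mem_range.mp hq))]
        ring

lemma integral_mixedMonomial_add_single_exchange [IsFiniteMeasure μ]
    (hμ : IsUnitarilyInvariant μ) (hsphere : ∀ᵐ ψ ∂μ, ∑ i, Complex.normSq (ψ i) = 1)
    (c : ι → ℕ) (i j : ι) :
    (c i + 1 : ℂ) * ∫ ψ, mixedMonomial (c + Pi.single j 1) (c + Pi.single j 1) ψ ∂μ =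
      (c j + 1) * ∫ ψ, mixedMonomial (c + Pi.single i 1) (c + Pi.single i 1) ψ ∂μ := by
  rcases eq_or_ne i j with rfl | hij
  · rfl
  set c₀ := Function.update (Function.update c i 0) j 0
  set n := c i + c j + 1
  have h₀i : c₀ i = 0 := by simp [c₀, hij]
  have h₀j : c₀ j = 0 := by simp [c₀]
  have hi : c + Pi.single i 1 = c₀ + Pi.single i (c i + 1) + Pi.single j (n - (c i + 1)) := by
    funext k
    by_cases hki : k = i <;> by_cases hkj : k = j <;> simp [c₀, n, hki, hkj, hij]
  have hj : c + Pi.single j 1 = c₀ + Pi.single i (c i) + Pi.single j (n - c i) := by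
    funext k
    by_cases hki : k = i <;> by_cases hkj : k = j <;> simp [c₀, n, hki, hkj, hij]
    omega
  have eᵢ := hμ.choose_mul_integral_mixedMonomial hsphere hij h₀i h₀j (n := n) (p := c i + 1)
    (by omega)
  have eⱼ := hμ.choose_mul_integral_mixedMonomial hsphere hij h₀i h₀j (n := n) (p := c i)
    (by omega)
  rw [← hi] at eᵢ
  rw [← hj] at eⱼ
  have hchoose : (n.choose (c i + 1) : ℂ) * (c i + 1) = n.choose (c i) * (c j + 1) := by
    have := Nat.choose_succ_right_eq n (c i)
    rw [show n - c i = c j + 1 by omega] at this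
    exact_mod_cast this
  have hC : (n.choose (c i) : ℂ) ≠ 0 := by exact_mod_cast (Nat.choose_pos (by omega)).ne'
  refine mul_left_cancel₀ hC ?_
  linear_combination (c i + 1 : ℂ) * eⱼ - (c i + 1 : ℂ) * eᵢ +
    (∫ ψ, mixedMonomial (c + Pi.single i 1) (c + Pi.single i 1) ψ ∂μ) * hchoose

lemma card_add_sum_mul_integral_mixedMonomial_add_single
    [IsFiniteMeasure μ] (hμ : IsUnitarilyInvariant μ)
    (hsphere : ∀ᵐ ψ ∂μ, ∑ i, Complex.normSq (ψ i) = 1) (c : ι → ℕ) (j : ι) :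
    ((Fintype.card ι + ∑ k, c k : ℕ) : ℂ) *
        ∫ ψ, mixedMonomial (c + Pi.single j 1) (c + Pi.single j 1) ψ ∂μ =
      (c j + 1) * ∫ ψ, mixedMonomial c c ψ ∂μ := by
  calc ((Fintype.card ι + ∑ k, c k : ℕ) : ℂ) *
        ∫ ψ, mixedMonomial (c + Pi.single j 1) (c + Pi.single j 1) ψ ∂μ
      = ∑ i, (c i + 1 : ℂ) * ∫ ψ, mixedMonomial (c + Pi.single j 1) (c + Pi.single j 1) ψ ∂μ := by
        rw [← sum_mul, sum_add_distrib, sum_const, card_univ]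
        push_cast
        ring
    _ = ∑ i, (c j + 1 : ℂ) * ∫ ψ, mixedMonomial (c + Pi.single i 1) (c + Pi.single i 1) ψ ∂μ :=
        sum_congr rfl fun i _ => hμ.integral_mixedMonomial_add_single_exchange hsphere c i j
    _ = (c j + 1) * ∫ ψ, mixedMonomial c c ψ ∂μ := by
        rw [← mul_sum, sum_integral_mixedMonomial_add_single hsphere]

theorem integral_mixedMonomial_self [IsProbabilityMeasure μ]
    (hμ : IsUnitarilyInvariant μ) (hsphere : ∀ᵐ ψ ∂μ, ∑ i, Complex.normSq (ψ i) = 1)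
    (c : ι → ℕ) :
    ∫ ψ, mixedMonomial c c ψ ∂μ =
      ((Fintype.card ι - 1).factorial / (Fintype.card ι + ∑ k, c k - 1).factorial : ℂ) *
        ∏ k, ((c k).factorial : ℂ) := by
  induction hn : ∑ k, c k generalizing c with
  | zero =>
    obtain rfl : c = 0 := funext fun k => (sum_eq_zero_iff.mp hn) k (mem_univ k)
    simp [mixedMonomial_zero, Nat.factorial_ne_zero]
  | succ n ih =>
    obtain ⟨c, j, rfl⟩ := exists_eq_add_single_of_sum_eq_succ hn
    have hc : ∑ k, c k = n := by rw [sum_add_single] at hn; omega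
    have hstep := hμ.card_add_sum_mul_integral_mixedMonomial_add_single hsphere c j
    have hq : 0 < Fintype.card ι := Fintype.card_pos_iff.mpr ⟨j⟩
    have hfact : (Fintype.card ι + (n + 1) - 1).factorial =
        (Fintype.card ι + n) * (Fintype.card ι + n - 1).factorial := by
      rw [show Fintype.card ι + (n + 1) - 1 = Fintype.card ι + n - 1 + 1 by omega,
        Nat.factorial_succ, Nat.sub_add_cancel (by omega)]
    rw [ih c hc, hc] at hstep
    have hne : ((Fintype.card ι + n : ℕ) : ℂ) ≠ 0 := by exact_mod_cast (by omega)
    refine mul_left_cancel₀ hne ?_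
    rw [hstep, ← Nat.cast_prod, ← Nat.cast_prod, prod_factorial_add_single, hfact]
    push_cast at hne ⊢
    field_simp

end IsUnitarilyInvariant

section Counting

variable {α : Type*} [Fintype α]

def fiberCard (f : α → ι) (j : ι) : ℕ := #{k | f k = j}

lemma sum_fiberCard (f : α → ι) : ∑ j, fiberCard f j = Fintype.card α :=
  (card_eq_sum_card_fiberwise fun k _ => mem_univ (f k)).symm

lemma prod_comp_eq_prod_pow_fiberCard {M : Type*} [CommMonoid M] (f : α → ι) (h : ι → M) :
    ∏ k, h (f k) = ∏ j, h j ^ fiberCard f j :=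
  (prod_fiberwise' univ f h).symm.trans (prod_congr rfl fun _ _ => prod_const _)

lemma prod_mul_conj_eq_mixedMonomial (f g : α → ι) (ψ : ι → ℂ) :
    ∏ k, ψ (f k) * (starRingEnd ℂ) (ψ (g k)) = mixedMonomial (fiberCard f) (fiberCard g) ψ := by
  rw [prod_mul_distrib, prod_comp_eq_prod_pow_fiberCard f ψ,
    prod_comp_eq_prod_pow_fiberCard g fun i => (starRingEnd ℂ) (ψ i), mixedMonomial,
    prod_mul_distrib]

def permCompEquiv (f g : α → ι) :
    {σ : Equiv.Perm α // ∀ k, f k = g (σ k)} ≃ ∀ j, {k // f k = j} ≃ {k // g k = j} where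
  toFun σ j :=
    { toFun := fun k => ⟨σ.1 k.1, by rw [← σ.2 k.1, k.2]⟩
      invFun := fun k => ⟨σ.1.symm k.1, by rw [σ.2 (σ.1.symm k.1), Equiv.apply_symm_apply, k.2]⟩
      left_inv := fun k => Subtype.ext (σ.1.symm_apply_apply k.1)
      right_inv := fun k => Subtype.ext (σ.1.apply_symm_apply k.1) }
  invFun e := ⟨(Equiv.sigmaFiberEquiv f).symm.trans
      ((Equiv.sigmaCongrRight e).trans (Equiv.sigmaFiberEquiv g)),
    fun k => ((e (f k)) ⟨k, rfl⟩).2.symm⟩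
  left_inv _ := rfl
  right_inv e := by
    funext j
    ext ⟨k, rfl⟩
    rfl

variable [DecidableEq α]

lemma card_filter_perm_comp_eq (f g : α → ι)
    [DecidablePred fun σ : Equiv.Perm α => ∀ k, f k = g (σ k)] :
    #{σ : Equiv.Perm α | ∀ k, f k = g (σ k)} =
      if fiberCard f = fiberCard g then ∏ j, (fiberCard f j).factorial else 0 := by
  rw [← Fintype.card_subtype, Fintype.card_congr (permCompEquiv f g), Fintype.card_pi]
  have hcard : ∀ (h : α → ι) j, Fintype.card {k // h k = j} = fiberCard h j :=
    fun _ _ => Fintype.card_subtype _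
  split_ifs with h
  · refine prod_congr rfl fun j _ => ?_
    rw [Fintype.card_equiv (Fintype.equivOfCardEq (by rw [hcard, hcard, h])), hcard]
  · obtain ⟨j, hj⟩ := Function.ne_iff.mp h
    refine prod_eq_zero (mem_univ j) (Fintype.card_eq_zero_iff.mpr ⟨fun e => hj ?_⟩)
    rw [← hcard, ← hcard, Fintype.card_congr e]

end Counting

end SphereMoments

open SphereMoments in
theorem haar_state_moments_general (q m : ℕ)
    (μ : Measure (Fin q → ℂ)) [IsProbabilityMeasure μ]
    (hsphere : μ {ψ : Fin q → ℂ | ∑ i, Complex.normSq (ψ i) = 1}ᶜ = 0)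
    (hinv : ∀ U : Matrix.unitaryGroup (Fin q) ℂ,
      μ.map (fun ψ => (U : Matrix (Fin q) (Fin q) ℂ).mulVec ψ) = μ)
    (f g : Fin m → Fin q) :
    ∫ ψ, ∏ k, ψ (f k) * (starRingEnd ℂ) (ψ (g k)) ∂μ
      = (((q - 1).factorial : ℂ) / ((q + m - 1).factorial : ℂ))
          * ((Finset.univ.filter
              fun σ : Equiv.Perm (Fin m) => ∀ k, f k = g (σ k)).card : ℂ) := by
  have hμ : IsUnitarilyInvariant μ := hinv
  have hae : ∀ᵐ ψ ∂μ, ∑ i, Complex.normSq (ψ i) = 1 := mem_ae_iff.mpr hsphere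
  simp only [prod_mul_conj_eq_mixedMonomial, card_filter_perm_comp_eq]
  by_cases h : fiberCard f = fiberCard g
  · rw [← h, hμ.integral_mixedMonomial_self hae, if_pos rfl, sum_fiberCard, Fintype.card_fin,
      Fintype.card_fin, Nat.cast_prod]
  · obtain ⟨j, hj⟩ := Function.ne_iff.mp h
    rw [hμ.integral_mixedMonomial_eq_zero hj, if_neg h, Nat.cast_zero, mul_zero]

/-- Moments of the uniform (unitarily invariant) probability measure on the unit sphere
of `ℂ^q`: for all `f, g : Fin m → Fin q`,
`∫ ∏ₖ ψ(f k) conj(ψ(g k)) dμ = ((q-1)!/(q+m-1)!) · #{σ ∈ S_m : ∀ k, f k = g (σ k)}`. -/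
theorem haar_state_moments (q m : ℕ) (hq : 1 ≤ q) (hm : 1 ≤ m)
    (μ : Measure (Fin q → ℂ)) [IsProbabilityMeasure μ]
    (hsphere : μ {ψ : Fin q → ℂ | ∑ i, Complex.normSq (ψ i) = 1}ᶜ = 0)
    (hinv : ∀ U : Matrix.unitaryGroup (Fin q) ℂ,
      μ.map (fun ψ => (U : Matrix (Fin q) (Fin q) ℂ).mulVec ψ) = μ)
    (f g : Fin m → Fin q) :
    ∫ ψ, ∏ k, ψ (f k) * (starRingEnd ℂ) (ψ (g k)) ∂μ
      = (((q - 1).factorial : ℂ) / ((q + m - 1).factorial : ℂ))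
          * ((Finset.univ.filter
              fun σ : Equiv.Perm (Fin m) => ∀ k, f k = g (σ k)).card : ℂ) :=
  haar_state_moments_general q m μ hsphere hinv f g
end

section
/- Let H be a finite group, let Γ be a finite connected graph with vertex set V and edge set E, let v₀ ∈ V be a fixed root, and for each edge e = (i,j) ∈ E let f_e : H → ℝ satisfy 0 ≤ f_e(h) ≤ 1 for all h ∈ H. Then for any spanning tree T ⊆ E of Γ, the pinned partition function is bounded by the tree factorization: ∑_{σ : V → H, σ(v₀) = 1} ∏_{e = (i,j) ∈ E} f_e(σ(i) · σ(j)⁻¹) ≤ ∏_{e ∈ T} (∑_{h ∈ H} f_e(h)). -/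
/-!
Each factor is at most `1`, so dropping the non-tree edges can only increase the summand.
A configuration pinned at `v₀` is determined by its increments `σ i * (σ j)⁻¹` along the
tree edges, because the tree joins every vertex to `v₀`. The remaining sum therefore runs over
an injectively labelled subset of `H ^ T`; it is bounded by the sum over all of `H ^ T`,
which factorizes as `∏ e ∈ T, ∑ h, f e h`.
-/

open Finset

theorem SimpleGraph.Reachable.eq_of_forall_adj_eq {V α : Type*} {G : SimpleGraph V}
    {φ : V → α} (hφ : ∀ a b, G.Adj a b → φ a = φ b) {u v : V} (huv : G.Reachable u v) :
    φ u = φ v := by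
  obtain ⟨p⟩ := huv
  induction p with
  | nil => rfl
  | cons hadj _ ih => exact (hφ _ _ hadj).trans ih

theorem mul_inv_eq_mul_inv_iff_inv_mul_eq_inv_mul {H : Type*} [Group H] {a b c d : H} :
    a * b⁻¹ = c * d⁻¹ ↔ c⁻¹ * a = d⁻¹ * b := by
  rw [mul_inv_eq_iff_eq_mul, mul_assoc, ← inv_mul_eq_iff_eq_mul]

theorem SimpleGraph.Preconnected.eq_of_mul_inv_eq {V H : Type*} [Group H] {G : SimpleGraph V}
    (hG : G.Preconnected) {σ τ : V → H}
    (hadj : ∀ a b, G.Adj a b → σ a * (σ b)⁻¹ = τ a * (τ b)⁻¹) {v₀ : V} (h₀ : σ v₀ = τ v₀) :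
    σ = τ := by
  have hconst (v : V) : (τ v₀)⁻¹ * σ v₀ = (τ v)⁻¹ * σ v :=
    (hG v₀ v).eq_of_forall_adj_eq fun a b hab =>
      mul_inv_eq_mul_inv_iff_inv_mul_eq_inv_mul.mp (hadj a b hab)
  funext v
  have := hconst v
  rw [h₀, inv_mul_cancel] at this
  exact (inv_mul_eq_one.mp this.symm).symm

theorem SimpleGraph.fromRel_mul_inv_eq_of_adj {V E H : Type*} [Group H] {ends : E → V × V}
    {T : Finset E} {σ τ : V → H}
    (hT : ∀ e ∈ T, σ (ends e).1 * (σ (ends e).2)⁻¹ = τ (ends e).1 * (τ (ends e).2)⁻¹)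
    {a b : V} (hab : (SimpleGraph.fromRel fun a b => ∃ e ∈ T, ends e = (a, b)).Adj a b) :
    σ a * (σ b)⁻¹ = τ a * (τ b)⁻¹ := by
  obtain ⟨-, ⟨e, he, hends⟩ | ⟨e, he, hends⟩⟩ := SimpleGraph.fromRel_adj _ _ _ |>.mp hab
  · simpa [hends] using hT e he
  · simpa [hends] using congrArg (·⁻¹) (hT e he)

theorem Finset.sum_prod_le_prod_sum_of_injOn {α ι κ R : Type*} [Fintype κ] [CommSemiring R]
    [PartialOrder R] [IsOrderedRing R] {s : Finset α} {T : Finset ι} {Φ : α → T → κ}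
    (hΦ : Set.InjOn Φ s) {w : ι → κ → R} (hw : ∀ i k, 0 ≤ w i k) :
    ∑ a ∈ s, ∏ e : T, w e (Φ a e) ≤ ∏ e ∈ T, ∑ k, w e k := by
  classical
  calc ∑ a ∈ s, ∏ e : T, w e (Φ a e)
      = ∑ g ∈ s.image Φ, ∏ e : T, w e (g e) :=
        (sum_image (f := fun g => ∏ e : T, w e (g e)) hΦ).symm
    _ ≤ ∑ g : T → κ, ∏ e : T, w e (g e) :=
        sum_le_univ_sum_of_nonneg fun g => prod_nonneg fun e _ => hw e (g e)
    _ = ∏ e ∈ T, ∑ k, w e k := by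
        rw [← Fintype.prod_sum, prod_coe_sort T fun e => ∑ k, w e k]

theorem spanning_tree_partition_function_bound_general
    {V E H : Type*} [Fintype V] [DecidableEq V] [Fintype E]
    [Fintype H] [DecidableEq H] [Group H]
    (ends : E → V × V)
    (v₀ : V) (f : E → H → ℝ)
    (hf : ∀ e h, 0 ≤ f e h ∧ f e h ≤ 1)
    (T : Finset E)
    (htree : (SimpleGraph.fromRel fun a b => ∃ e ∈ T, ends e = (a, b)).IsTree) :
    ∑ σ ∈ Finset.univ.filter (fun σ : V → H => σ v₀ = 1),
        ∏ e, f e (σ (ends e).1 * (σ (ends e).2)⁻¹)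
      ≤ ∏ e ∈ T, ∑ h, f e h := by
  set increments : (V → H) → T → H := fun σ e => σ (ends e).1 * (σ (ends e).2)⁻¹
  have hinj : Set.InjOn increments (univ.filter fun σ : V → H => σ v₀ = 1) := by
    intro σ hσ τ hτ hστ
    simp only [coe_filter, mem_univ, true_and, Set.mem_ofPred_eq] at hσ hτ
    refine htree.connected.preconnected.eq_of_mul_inv_eq
      (fun a b => SimpleGraph.fromRel_mul_inv_eq_of_adj fun e he => ?_) (hσ.trans hτ.symm)
    exact congrFun hστ ⟨e, he⟩
  calc ∑ σ ∈ univ.filter (fun σ : V → H => σ v₀ = 1), ∏ e, f e (σ (ends e).1 * (σ (ends e).2)⁻¹)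
      ≤ ∑ σ ∈ univ.filter (fun σ : V → H => σ v₀ = 1), ∏ e : T, f e (increments σ e) := by
        refine sum_le_sum fun σ _ => ?_
        rw [prod_coe_sort T fun e => f e (σ (ends e).1 * (σ (ends e).2)⁻¹)]
        exact prod_le_prod_of_subset_of_le_one (subset_univ T) (fun e _ => (hf e _).1)
          fun e _ _ => (hf e _).2
    _ ≤ ∏ e ∈ T, ∑ h, f e h := sum_prod_le_prod_sum_of_injOn hinj fun e h => (hf e h).1

/-- Spanning-tree bound for a pinned partition function: for a finite connected graph
with vertex set `V`, edge set `E` (with chosen orientations `ends : E → V × V`), a root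
`v₀`, edge weights `0 ≤ f_e ≤ 1` on a finite group `H`, and a spanning tree `T ⊆ E`,
`∑_{σ : V → H, σ(v₀)=1} ∏_{e=(i,j)∈E} f_e(σ i · (σ j)⁻¹) ≤ ∏_{e∈T} ∑_h f_e(h)`. -/
theorem spanning_tree_partition_function_bound
    {V E H : Type*} [Fintype V] [DecidableEq V] [Fintype E] [DecidableEq E]
    [Fintype H] [DecidableEq H] [Group H]
    (ends : E → V × V)
    (hloop : ∀ e, (ends e).1 ≠ (ends e).2)
    (hconn : (SimpleGraph.fromRel fun a b => ∃ e, ends e = (a, b)).Connected)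
    (v₀ : V) (f : E → H → ℝ)
    (hf : ∀ e h, 0 ≤ f e h ∧ f e h ≤ 1)
    (T : Finset E)
    (hinjT : ∀ e₁ ∈ T, ∀ e₂ ∈ T, Sym2.mk (ends e₁) = Sym2.mk (ends e₂) → e₁ = e₂)
    (htree : (SimpleGraph.fromRel fun a b => ∃ e ∈ T, ends e = (a, b)).IsTree) :
    ∑ σ ∈ Finset.univ.filter (fun σ : V → H => σ v₀ = 1),
        ∏ e, f e (σ (ends e).1 * (σ (ends e).2)⁻¹)
      ≤ ∏ e ∈ T, ∑ h, f e h :=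
  spanning_tree_partition_function_bound_general ends v₀ f hf T htree
end

section
/- Let (Ω, P) be a probability space and let ρ : Ω → Matrix (Fin n) (Fin n) ℂ be a measurable family of density matrices such that ω ↦ Tr(ρ(ω)²) and ω ↦ S(ρ(ω)) are integrable. Then −log(E[Tr(ρ²)]) ≤ E[S(ρ)], i.e., the expected von Neumann entropy is bounded below by minus the logarithm of the expected purity. -/
/-!
Everything follows from the tangent-line bound `-log y ≤ -log x + x / y - 1` for the convex
function `-log`. Weighted by the eigenvalues `λᵢ` of `ρ` and taken at `y = Tr ρ² = ∑ λᵢ²`, it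
gives `-log Tr ρ² ≤ S(ρ)` (the Rényi-2 entropy is at most the von Neumann entropy). Taken at
`y = 𝔼[Tr ρ²]` and integrated, it gives Jensen's inequality `-log 𝔼[Tr ρ²] ≤ 𝔼[-log Tr ρ²]`.
-/

open ComplexOrder MeasureTheory

/-- Matrices inherit the product measurable structure. -/
instance matrixMeasurableSpace {m n α : Type*} [MeasurableSpace α] :
    MeasurableSpace (Matrix m n α) :=
  inferInstanceAs (MeasurableSpace (m → n → α))

/-- The von Neumann entropy of a matrix: `S(ρ) = ∑ᵢ η(λᵢ)` where `λᵢ` are the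
eigenvalues of `ρ` and `η(x) = −x log x` (with `η(0) = 0`); set to `0` for
non-Hermitian matrices. -/
noncomputable def vonNeumannEntropy {n : ℕ} (ρ : Matrix (Fin n) (Fin n) ℂ) : ℝ :=
  if h : ρ.IsHermitian then ∑ i, Real.negMulLog (h.eigenvalues i) else 0

namespace Real

lemma neg_log_le_neg_log_add_div_sub_one {x y : ℝ} (hx : 0 < x) (hy : 0 < y) :
    -log y ≤ -log x + x / y - 1 := by
  have := log_le_sub_one_of_pos (div_pos hx hy)
  rw [log_div hx.ne' hy.ne'] at this
  linarith

lemma mul_neg_log_le_negMulLog_add {x y : ℝ} (hx : 0 ≤ x) (hy : 0 < y) :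
    x * -log y ≤ negMulLog x + x ^ 2 / y - x := by
  rcases hx.eq_or_lt with rfl | hx
  · simp
  · have := mul_le_mul_of_nonneg_left (neg_log_le_neg_log_add_div_sub_one hx hy) hx.le
    refine this.trans_eq ?_
    rw [negMulLog]
    field_simp

end Real

section ProbabilityVector

variable {ι : Type*} [Fintype ι] {w : ι → ℝ}

lemma sum_sq_pos_of_sum_eq_one (hw : ∀ i, 0 ≤ w i) (hsum : ∑ i, w i = 1) :
    0 < ∑ i, w i ^ 2 := by
  obtain ⟨i, -, hi⟩ := Finset.exists_ne_zero_of_sum_ne_zero (hsum ▸ one_ne_zero)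
  exact Finset.sum_pos' (fun j _ => sq_nonneg (w j))
    ⟨i, Finset.mem_univ i, pow_pos ((hw i).lt_of_ne' hi) 2⟩

lemma neg_log_sum_sq_le_sum_negMulLog (hw : ∀ i, 0 ≤ w i) (hsum : ∑ i, w i = 1) :
    -Real.log (∑ i, w i ^ 2) ≤ ∑ i, Real.negMulLog (w i) := by
  set s := ∑ i, w i ^ 2
  have hs : 0 < s := sum_sq_pos_of_sum_eq_one hw hsum
  calc -Real.log s = ∑ i, w i * -Real.log s := by rw [← Finset.sum_mul, hsum, one_mul]
    _ ≤ ∑ i, (Real.negMulLog (w i) + w i ^ 2 / s - w i) :=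
        Finset.sum_le_sum fun i _ => Real.mul_neg_log_le_negMulLog_add (hw i) hs
    _ = ∑ i, Real.negMulLog (w i) := by
        rw [Finset.sum_sub_distrib, Finset.sum_add_distrib, ← Finset.sum_div, div_self hs.ne',
          hsum, add_sub_cancel_right]

end ProbabilityVector

namespace Matrix

variable {n 𝕜 : Type*} [Fintype n] [DecidableEq n] [RCLike 𝕜]

namespace IsHermitian

variable {A : Matrix n n 𝕜}

lemma trace_mul_self_eq_sum_eigenvalues_sq (hA : A.IsHermitian) :
    (A * A).trace = ∑ i, (hA.eigenvalues i : 𝕜) ^ 2 := by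
  conv_lhs => rw [hA.spectral_theorem, ← map_mul, Unitary.conjStarAlgAut_apply,
    trace_mul_cycle, Unitary.coe_star_mul_self, one_mul, diagonal_mul_diagonal, trace_diagonal]
  simp [sq]

lemma sum_eigenvalues_eq_one (hA : A.IsHermitian) (htr : A.trace = 1) :
    ∑ i, hA.eigenvalues i = 1 := by
  have : ((∑ i, hA.eigenvalues i : ℝ) : 𝕜) = 1 := by
    rw [RCLike.ofReal_sum, ← htr, hA.trace_eq_sum_eigenvalues]
  exact_mod_cast this

lemma re_trace_mul_self_eq_sum_eigenvalues_sq {A : Matrix n n ℂ} (hA : A.IsHermitian) :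
    (A * A).trace.re = ∑ i, hA.eigenvalues i ^ 2 := by
  simp [hA.trace_mul_self_eq_sum_eigenvalues_sq, ← Complex.ofReal_pow]

end IsHermitian

lemma PosSemidef.re_trace_mul_self_pos {A : Matrix n n ℂ} (hA : A.PosSemidef)
    (htr : A.trace = 1) : 0 < (A * A).trace.re := by
  rw [hA.1.re_trace_mul_self_eq_sum_eigenvalues_sq]
  exact sum_sq_pos_of_sum_eq_one hA.eigenvalues_nonneg (hA.1.sum_eigenvalues_eq_one htr)

end Matrix

lemma neg_log_re_trace_mul_self_le_vonNeumannEntropy {n : ℕ} {ρ : Matrix (Fin n) (Fin n) ℂ}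
    (hρ : ρ.PosSemidef) (htr : ρ.trace = 1) :
    -Real.log (ρ * ρ).trace.re ≤ vonNeumannEntropy ρ := by
  rw [vonNeumannEntropy, dif_pos hρ.1, hρ.1.re_trace_mul_self_eq_sum_eigenvalues_sq]
  exact neg_log_sum_sq_le_sum_negMulLog hρ.eigenvalues_nonneg (hρ.1.sum_eigenvalues_eq_one htr)

lemma neg_log_integral_le_integral_of_neg_log_le {Ω : Type*} [MeasurableSpace Ω] {P : Measure Ω}
    [IsProbabilityMeasure P] {f g : Ω → ℝ} (hf_pos : ∀ ω, 0 < f ω) (hf : Integrable f P)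
    (hg : Integrable g P) (hfg : ∀ ω, -Real.log (f ω) ≤ g ω) :
    -Real.log (∫ ω, f ω ∂P) ≤ ∫ ω, g ω ∂P := by
  set m := ∫ ω, f ω ∂P
  have hm : 0 < m := by
    rw [integral_pos_iff_support_of_nonneg (fun ω => (hf_pos ω).le) hf,
      Function.support_eq_univ fun ω => (hf_pos ω).ne', measure_univ]
    exact one_pos
  have htangent : ∀ ω, -Real.log m ≤ g ω + (f ω / m - 1) := fun ω => by
    linarith [Real.neg_log_le_neg_log_add_div_sub_one (hf_pos ω) hm, hfg ω]
  have hint : Integrable (fun ω => f ω / m - 1) P := (hf.div_const m).sub (integrable_const 1)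
  calc -Real.log m = ∫ _, -Real.log m ∂P := by simp
    _ ≤ ∫ ω, g ω + (f ω / m - 1) ∂P := integral_mono (integrable_const _) (hg.add hint) htangent
    _ = ∫ ω, g ω ∂P := by
        rw [integral_add hg hint, integral_sub (hf.div_const m) (integrable_const 1), integral_div,
          div_self hm.ne']
        simp

theorem neg_log_expected_purity_le_expected_entropy_general
    {n : ℕ} {Ω : Type*} [MeasurableSpace Ω] (P : Measure Ω) [IsProbabilityMeasure P]
    (ρ : Ω → Matrix (Fin n) (Fin n) ℂ)
    (hdens : ∀ ω, (ρ ω).PosSemidef ∧ (ρ ω).trace = 1)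
    (hint_purity : Integrable (fun ω => ((ρ ω * ρ ω).trace).re) P)
    (hint_entropy : Integrable (fun ω => vonNeumannEntropy (ρ ω)) P) :
    -Real.log (∫ ω, ((ρ ω * ρ ω).trace).re ∂P)
      ≤ ∫ ω, vonNeumannEntropy (ρ ω) ∂P :=
  neg_log_integral_le_integral_of_neg_log_le
    (fun ω => (hdens ω).1.re_trace_mul_self_pos (hdens ω).2) hint_purity hint_entropy
    (fun ω => neg_log_re_trace_mul_self_le_vonNeumannEntropy (hdens ω).1 (hdens ω).2)

/-- For a measurable family of density matrices on a probability space, with integrable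
purity and entropy, `−log 𝔼[Tr(ρ²)] ≤ 𝔼[S(ρ)]`. -/
theorem neg_log_expected_purity_le_expected_entropy
    {n : ℕ} {Ω : Type*} [MeasurableSpace Ω] (P : Measure Ω) [IsProbabilityMeasure P]
    (ρ : Ω → Matrix (Fin n) (Fin n) ℂ) (hmeas : Measurable ρ)
    (hdens : ∀ ω, (ρ ω).PosSemidef ∧ (ρ ω).trace = 1)
    (hint_purity : Integrable (fun ω => ((ρ ω * ρ ω).trace).re) P)
    (hint_entropy : Integrable (fun ω => vonNeumannEntropy (ρ ω)) P) :
    -Real.log (∫ ω, ((ρ ω * ρ ω).trace).re ∂P)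
      ≤ ∫ ω, vonNeumannEntropy (ρ ω) ∂P :=
  neg_log_expected_purity_le_expected_entropy_general P ρ hdens hint_purity hint_entropy
end
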